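/- arXiv:math/0412463 — 4 statements merged into one kernel-verified Lean document; each statement's English description precedes it below -/
import Mathlib

section
/- If A = log E[exp(η - E[η])] < ∞ and E[exp(λη)] ≤ (E[exp η])^{λ²} exp(λ(1-λ)E[η]) for all λ ∈ [0,1], then P(η ≥ E[η] + t) ≤ exp(-t²/(4A)) for 0 ≤ t ≤ 2A, and P(η ≥ E[η] + t) ≤ exp(A - t) for t ≥ 2A. -/
open MeasureTheory Real

/-- concentration from the MGF bound: if
`A = log E[exp (η - E η)]` is the (finite) log-MGF value at `1` and
`E[exp (λ η)] ≤ (E[exp η])^(λ²) exp (λ (1-λ) E η)` for all `λ ∈ [0,1]`, then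
`P(η ≥ E η + t) ≤ exp (-t²/(4A))` for `0 ≤ t ≤ 2A` and
`P(η ≥ E η + t) ≤ exp (A - t)` for `t ≥ 2A`. -/
theorem concentration_from_mgf_bound
    {Ω : Type*} [MeasureSpace Ω] [IsProbabilityMeasure (volume : Measure Ω)]
    (η : Ω → ℝ) (hη : Integrable η)
    (hexp : ∀ l : ℝ, l ∈ Set.Icc (0 : ℝ) 1 →
      Integrable (fun ω => Real.exp (l * η ω)))
    (A : ℝ) (hA : A = Real.log (∫ ω, Real.exp (η ω - ∫ ω', η ω')))
    (hmgf : ∀ l : ℝ, l ∈ Set.Icc (0 : ℝ) 1 →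
      (∫ ω, Real.exp (l * η ω))
        ≤ (∫ ω, Real.exp (η ω)) ^ (l ^ 2)
            * Real.exp (l * (1 - l) * ∫ ω, η ω)) :
    (∀ t : ℝ, 0 ≤ t → t ≤ 2 * A →
      ((volume : Measure Ω) {ω | (∫ ω', η ω') + t ≤ η ω}).toReal ≤ Real.exp (-(t ^ 2) / (4 * A)))
    ∧ (∀ t : ℝ, 2 * A ≤ t →
      ((volume : Measure Ω) {ω | (∫ ω', η ω') + t ≤ η ω}).toReal ≤ Real.exp (A - t)) := by
  set m : ℝ := ∫ ω', η ω' with hm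
  have hint1 : Integrable (fun ω => Real.exp (η ω)) := by
    have := hexp 1 (by simp)
    simpa using this
  have hMpos : 0 < ∫ ω, Real.exp (η ω) := by
    apply integral_exp_pos hint1
  -- A = log M - m
  have hAval : A = Real.log (∫ ω, Real.exp (η ω)) - m := by
    rw [hA]
    have : (∫ ω, Real.exp (η ω - m)) = (∫ ω, Real.exp (η ω)) * Real.exp (-m) := by
      rw [← integral_mul_const]
      congr 1; ext ω; rw [← Real.exp_add]; ring_nf
    rw [this, Real.log_mul hMpos.ne' (Real.exp_pos _).ne', Real.log_exp]
    ring
  -- key bound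
  have key : ∀ l ∈ Set.Icc (0 : ℝ) 1, ∀ t : ℝ,
      ((volume : Measure Ω) {ω | m + t ≤ η ω}).toReal ≤ Real.exp (l ^ 2 * A - l * t) := by
    intro l hl t
    have h1 := ProbabilityTheory.measure_ge_le_exp_mul_mgf (X := η) (μ := volume)
      (m + t) hl.1 (hexp l hl)
    have h2 : ProbabilityTheory.mgf η volume l ≤
        Real.exp (l ^ 2 * Real.log (∫ ω, Real.exp (η ω)) + l * (1 - l) * m) := by
      have := hmgf l hl
      rw [Real.rpow_def_of_pos hMpos, ← Real.exp_add] at this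
      simpa [ProbabilityTheory.mgf, mul_comm] using this
    calc ((volume : Measure Ω) {ω | m + t ≤ η ω}).toReal
        ≤ Real.exp (-l * (m + t)) * ProbabilityTheory.mgf η volume l := h1
      _ ≤ Real.exp (-l * (m + t)) *
          Real.exp (l ^ 2 * Real.log (∫ ω, Real.exp (η ω)) + l * (1 - l) * m) := by
          gcongr
      _ = Real.exp (l ^ 2 * A - l * t) := by
          rw [← Real.exp_add, hAval]; ring_nf
  constructor
  · intro t ht0 ht2
    rcases eq_or_lt_of_le ht0 with h0 | hpos
    · have := key 0 (by simp) t
      simpa [← h0] using this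
    · have hApos : 0 < A := by nlinarith
      have hl : t / (2 * A) ∈ Set.Icc (0 : ℝ) 1 := by
        constructor
        · positivity
        · rw [div_le_one (by linarith)]; exact ht2
      have := key _ hl t
      refine this.trans_eq ?_
      congr 1
      field_simp
      ring
  · intro t ht
    have := key 1 (by simp) t
    simpa using this
end

section
/- Let f₁ ∈ 𝒞 (nonnegative, symmetric, nondecreasing on [0,∞)) and f₂ ∈ 𝒞′ (odd, nondecreasing on [0,∞), hence nonnegative on [0,∞)). Let V(x, z) = exp(m(Φ̃(x+z) - ψ(x))) where Φ̃ is convex, symmetric, nonnegative, ψ(x) = (1/m) log E[exp(m Φ̃(x+z))], z ~ N(0, σ²), m ≥ 0. Then for every x ≥ 0: E[V(x,z) f₁(x+z) f₂(x+z)] ≥ E[V(x,z) f₁(x+z)] · E[V(x,z) f₂(x+z)]. -/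
open MeasureTheory ProbabilityTheory Real

private lemma even_convexOn_mono {Φ : ℝ → ℝ} (hc : ConvexOn ℝ Set.univ Φ)
    (hs : ∀ x, Φ (-x) = Φ x) : MonotoneOn Φ (Set.Ici (0:ℝ)) := by
  intro a ha b hb hab
  simp only [Set.mem_Ici] at ha hb
  rcases eq_or_lt_of_le hb with h0 | h0
  · have ha0 : a = 0 := le_antisymm (hab.trans h0.symm.le) ha
    simp [ha0, ← h0]
  · set t : ℝ := (b - a)/(2*b) with ht_def
    have ht0 : 0 ≤ t := div_nonneg (by linarith) (by linarith)
    have ht1 : 0 ≤ 1 - t := by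
      rw [sub_nonneg, ht_def, div_le_one (by linarith)]; linarith
    have hsum : t + (1 - t) = 1 := by ring
    have := hc.2 (Set.mem_univ (-b)) (Set.mem_univ b) ht0 ht1 hsum
    have hcomb : t • (-b) + (1 - t) • b = a := by
      simp only [smul_eq_mul, ht_def]
      field_simp
      ring
    rw [hcomb, hs b] at this
    calc Φ a ≤ t * Φ b + (1 - t) * Φ b := by simpa [smul_eq_mul] using this
    _ = Φ b := by ring

private lemma core_pointwise {f₁ f₂ : ℝ → ℝ}
    (hf₁even : ∀ x, f₁ (-x) = f₁ x) (hf₁mono : MonotoneOn f₁ (Set.Ici (0:ℝ)))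
    (hf₂odd : ∀ x, f₂ (-x) = -f₂ x) (hf₂mono : MonotoneOn f₂ (Set.Ici (0:ℝ)))
    {c : ℝ} (hc : c ≤ 0) (u v : ℝ) :
    0 ≤ (f₁ u - f₁ v) *
      (f₂ u * (1 - Real.exp (c*u)) * (1 + Real.exp (c*v))
        - f₂ v * (1 - Real.exp (c*v)) * (1 + Real.exp (c*u))) := by
  set e : ℝ → ℝ := fun t => Real.exp (c*t) with he_def
  have hepos : ∀ t, 0 < 1 + e t := fun t => by positivity
  set q : ℝ → ℝ := fun t => f₂ t * (1 - e t) / (1 + e t) with hq_def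
  have hq_id : ∀ t, q t * (1 + e t) = f₂ t * (1 - e t) :=
    fun t => div_mul_cancel₀ _ (hepos t).ne'
  have hf₂0 : f₂ 0 = 0 := by have := hf₂odd 0; simp at this; linarith
  have hqeven : ∀ t, q (-t) = q t := by
    intro t
    have h1 : e (-t) = (e t)⁻¹ := by
      simp only [he_def]; rw [← Real.exp_neg]; ring_nf
    simp only [hq_def, h1, hf₂odd t]
    have h2 : e t ≠ 0 := (Real.exp_pos _).ne'
    field_simp
    ring
  have hf₁abs : ∀ t, f₁ t = f₁ |t| := by
    intro t
    rcases le_total 0 t with h | h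
    · rw [abs_of_nonneg h]
    · rw [abs_of_nonpos h]; exact (hf₁even t).symm
  have hqabs : ∀ t, q t = q |t| := by
    intro t
    rcases le_total 0 t with h | h
    · rw [abs_of_nonneg h]
    · rw [abs_of_nonpos h]; exact (hqeven t).symm
  have hqmono : MonotoneOn q (Set.Ici (0:ℝ)) := by
    intro a ha b hb hab
    simp only [Set.mem_Ici] at ha hb
    have heab : e b ≤ e a := Real.exp_le_exp.2 (mul_le_mul_of_nonpos_left hab hc)
    have hea1 : e a ≤ 1 := by
      rw [he_def]; simpa using Real.exp_le_one_iff.2 (mul_nonpos_of_nonpos_of_nonneg hc ha)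
    have heb1 : e b ≤ 1 := heab.trans hea1
    have hf2a : 0 ≤ f₂ a := by
      have := hf₂mono (Set.mem_Ici.2 le_rfl) (Set.mem_Ici.2 ha) ha
      rw [hf₂0] at this; exact this
    have hf2ab : f₂ a ≤ f₂ b := hf₂mono (Set.mem_Ici.2 ha) (Set.mem_Ici.2 hb) hab
    have hra : 0 ≤ (1 - e a) / (1 + e a) :=
      div_nonneg (by linarith) (hepos a).le
    have hrab : (1 - e a) / (1 + e a) ≤ (1 - e b) / (1 + e b) := by
      rw [div_le_div_iff₀ (hepos a) (hepos b)]
      nlinarith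
    simp only [hq_def, mul_div_assoc]
    exact mul_le_mul hf2ab hrab hra (le_trans hf2a hf2ab)
  have key : f₂ u * (1 - e u) * (1 + e v) - f₂ v * (1 - e v) * (1 + e u)
      = (q u - q v) * ((1 + e u) * (1 + e v)) := by
    simp only [hq_def]
    field_simp [(hepos u).ne', (hepos v).ne']
  have hsign : 0 ≤ (f₁ u - f₁ v) * (q u - q v) := by
    rw [hf₁abs u, hf₁abs v, hqabs u, hqabs v]
    rcases le_total |u| |v| with h | h
    · have h1 : f₁ |u| ≤ f₁ |v| :=
        hf₁mono (Set.mem_Ici.2 (abs_nonneg u)) (Set.mem_Ici.2 (abs_nonneg v)) h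
      have h2 : q |u| ≤ q |v| :=
        hqmono (Set.mem_Ici.2 (abs_nonneg u)) (Set.mem_Ici.2 (abs_nonneg v)) h
      nlinarith [mul_nonneg (sub_nonneg.2 h1) (sub_nonneg.2 h2)]
    · have h1 : f₁ |v| ≤ f₁ |u| :=
        hf₁mono (Set.mem_Ici.2 (abs_nonneg v)) (Set.mem_Ici.2 (abs_nonneg u)) h
      have h2 : q |v| ≤ q |u| :=
        hqmono (Set.mem_Ici.2 (abs_nonneg v)) (Set.mem_Ici.2 (abs_nonneg u)) h
      nlinarith [mul_nonneg (sub_nonneg.2 h1) (sub_nonneg.2 h2)]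
  calc (0:ℝ) ≤ ((f₁ u - f₁ v) * (q u - q v)) * ((1 + e u) * (1 + e v)) :=
        mul_nonneg hsign (mul_nonneg (hepos u).le (hepos v).le)
  _ = (f₁ u - f₁ v) *
      (f₂ u * (1 - e u) * (1 + e v) - f₂ v * (1 - e v) * (1 + e u)) := by
        rw [key]; ring

private lemma gauss_reflect (σ2 : NNReal) (hσ2 : σ2 ≠ 0) (x : ℝ) (G : ℝ → ℝ)
    (hG : Measurable G) :
    (∫ z, G z ∂(gaussianReal 0 σ2)
      = ∫ z, G (-(2*x) - z) * Real.exp (-(2*x*(x+z))/(σ2:ℝ)) ∂(gaussianReal 0 σ2))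
    ∧ (Integrable G (gaussianReal 0 σ2) →
       Integrable (fun z => G (-(2*x) - z) * Real.exp (-(2*x*(x+z))/(σ2:ℝ)))
         (gaussianReal 0 σ2)) := by
  have hσ2R : (σ2:ℝ) ≠ 0 := NNReal.coe_ne_zero.2 hσ2
  have hpdf : ∀ z, gaussianPDFReal 0 σ2 (-(2*x) - z)
      = gaussianPDFReal 0 σ2 z * Real.exp (-(2*x*(x+z))/(σ2:ℝ)) := by
    intro z
    simp only [gaussianPDFReal, sub_zero]
    rw [show -(-(2 * x) - z) ^ 2 / (2 * (σ2:ℝ)) = -z ^ 2 / (2 * (σ2:ℝ))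
        + -(2 * x * (x + z)) / (σ2:ℝ) from by field_simp; ring, Real.exp_add]
    ring
  have hν : gaussianReal 0 σ2
      = volume.withDensity (fun z => ((gaussianPDFReal 0 σ2 z).toNNReal : ENNReal)) := by
    rw [gaussianReal_of_var_ne_zero 0 hσ2]; rfl
  have hmeasp : Measurable fun z => (gaussianPDFReal 0 σ2 z).toNNReal :=
    (measurable_gaussianPDFReal 0 σ2).real_toNNReal
  have step1 : ∀ F : ℝ → ℝ, ∫ z, F z ∂(gaussianReal 0 σ2)
      = ∫ z, gaussianPDFReal 0 σ2 z * F z := by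
    intro F
    rw [hν, integral_withDensity_eq_integral_smul hmeasp]
    congr 1
    funext z
    simp [NNReal.smul_def, Real.coe_toNNReal _ (gaussianPDFReal_nonneg 0 σ2 z)]
  have step1' : ∀ F : ℝ → ℝ, Integrable F (gaussianReal 0 σ2)
      ↔ Integrable (fun z => gaussianPDFReal 0 σ2 z * F z) volume := by
    intro F
    rw [hν, integrable_withDensity_iff_integrable_smul hmeasp]
    apply integrable_congr
    filter_upwards with z
    simp [NNReal.smul_def, Real.coe_toNNReal _ (gaussianPDFReal_nonneg 0 σ2 z)]
  have mp : MeasurePreserving (fun z : ℝ => -(2*x) - z) volume volume :=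
    Measure.measurePreserving_sub_left volume (-(2*x))
  have emb : MeasurableEmbedding (fun z : ℝ => -(2*x) - z) :=
    (MeasurableEquiv.subLeft (-(2*x))).measurableEmbedding
  have hcomp : ∀ z : ℝ, gaussianPDFReal 0 σ2 (-(2*x) - z) * G (-(2*x) - z)
      = gaussianPDFReal 0 σ2 z * (G (-(2*x) - z) * Real.exp (-(2*x*(x+z))/(σ2:ℝ))) := by
    intro z
    rw [hpdf z]; ring
  constructor
  · rw [step1 G, step1 (fun z => G (-(2*x) - z) * Real.exp (-(2*x*(x+z))/(σ2:ℝ)))]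
    rw [← mp.integral_comp emb (fun z => gaussianPDFReal 0 σ2 z * G z)]
    exact integral_congr_ae (Filter.Eventually.of_forall hcomp)
  · intro hGi
    rw [step1' G] at hGi
    have h2 : Integrable ((fun z => gaussianPDFReal 0 σ2 z * G z) ∘
        (fun z : ℝ => -(2*x) - z)) volume :=
      (mp.integrable_comp_emb emb).2 hGi
    rw [step1' (fun z => G (-(2*x) - z) * Real.exp (-(2*x*(x+z))/(σ2:ℝ)))]
    apply h2.congr
    filter_upwards with z
    exact hcomp z

set_option maxHeartbeats 2000000 in
/-- Lemma 2(b): correlation inequality under the tilted Gaussian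
measure: for `f₁ ∈ 𝒞` (nonnegative, even, nondecreasing on `[0,∞)`) and
`f₂ ∈ 𝒞′` (odd, nondecreasing on `[0,∞)`), and the Gibbs change of density
`V(x,z) = exp (m (Φ̃(x+z) - ψ(x)))`, for every `x ≥ 0`:
`E[V f₁ f₂] ≥ E[V f₁] ⬝ E[V f₂]`. -/
theorem gibbs_correlation_inequality
    (Φ : ℝ → ℝ) (hΦsmooth : ContDiff ℝ (⊤ : ℕ∞) Φ)
    (hΦconv : ConvexOn ℝ Set.univ Φ)
    (hΦsymm : ∀ x, Φ (-x) = Φ x) (hΦnonneg : ∀ x, 0 ≤ Φ x)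
    (σ2 : NNReal) (hσ2 : 0 < σ2) (m : ℝ) (hm : 0 ≤ m)
    (f₁ f₂ : ℝ → ℝ)
    (hf₁nonneg : ∀ x, 0 ≤ f₁ x) (hf₁even : ∀ x, f₁ (-x) = f₁ x)
    (hf₁mono : MonotoneOn f₁ (Set.Ici (0 : ℝ)))
    (hf₂odd : ∀ x, f₂ (-x) = -f₂ x)
    (hf₂mono : MonotoneOn f₂ (Set.Ici (0 : ℝ)))
    (ψ : ℝ → ℝ)
    (hψ : ∀ x, ψ x = (1 / m) *
      Real.log (∫ z, Real.exp (m * Φ (x + z)) ∂(gaussianReal 0 σ2)))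
    (V : ℝ → ℝ → ℝ)
    (hV : ∀ x z, V x z = Real.exp (m * (Φ (x + z) - ψ x)))
    (hint : ∀ x, Integrable (fun z => V x z * f₁ (x + z) * f₂ (x + z))
      (gaussianReal 0 σ2))
    (hint1 : ∀ x, Integrable (fun z => V x z * f₁ (x + z)) (gaussianReal 0 σ2))
    (hint2 : ∀ x, Integrable (fun z => V x z * f₂ (x + z)) (gaussianReal 0 σ2)) :
    ∀ x : ℝ, 0 ≤ x →
      (∫ z, V x z * f₁ (x + z) * f₂ (x + z) ∂(gaussianReal 0 σ2))
        ≥ (∫ z, V x z * f₁ (x + z) ∂(gaussianReal 0 σ2))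
            * (∫ z, V x z * f₂ (x + z) ∂(gaussianReal 0 σ2)) := by
  intro x hx
  have hσ2' : σ2 ≠ 0 := hσ2.ne'
  have hσ2R : (0:ℝ) < (σ2:ℝ) := hσ2
  -- trivial case: f₁ vanishes identically
  by_cases hzero : ∀ u, 0 ≤ u → f₁ u = 0
  · have hall : ∀ u, f₁ u = 0 := by
      intro u
      rcases le_total 0 u with h | h
      · exact hzero u h
      · rw [← hf₁even]; exact hzero (-u) (neg_nonneg.2 h)
    simp [hall]
  push_neg at hzero
  obtain ⟨r, hr0, hfr0⟩ := hzero
  have hfr : 0 < f₁ r := lt_of_le_of_ne (hf₁nonneg r) (Ne.symm hfr0)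
  set μ := gaussianReal 0 σ2 with hμ
  haveI hprob : IsProbabilityMeasure μ := by rw [hμ]; infer_instance
  -- basic facts
  have hf₂0 : f₂ 0 = 0 := by have := hf₂odd 0; simp at this; linarith
  have hVpos : ∀ z, 0 < V x z := fun z => by rw [hV]; exact Real.exp_pos _
  have hΦc : Continuous Φ := hΦsmooth.continuous
  have hVcont : Continuous fun z => V x z := by
    simp only [hV]
    exact Real.continuous_exp.comp
      (Continuous.mul continuous_const
        ((hΦc.comp (continuous_const.add continuous_id)).sub continuous_const))
  have hVmeas : Measurable fun z => V x z := hVcont.measurable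
  have mshift : Measurable fun z : ℝ => x + z := measurable_const.add measurable_id
  have mf₁ : Measurable f₁ := by
    have hmono : Monotone fun t => f₁ (max t 0) := fun a b hab =>
      hf₁mono (Set.mem_Ici.2 (le_max_right a 0)) (Set.mem_Ici.2 (le_max_right b 0))
        (max_le_max hab le_rfl)
    have hrepr : f₁ = fun u => f₁ (max |u| 0) := by
      funext u
      rcases le_total 0 u with h | h
      · rw [abs_of_nonneg h, max_eq_left h]
      · rw [abs_of_nonpos h, max_eq_left (neg_nonneg.2 h)]; exact (hf₁even u).symm
    rw [hrepr]
    exact hmono.measurable.comp measurable_abs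
  have mf₂ : Measurable f₂ := by
    have hmono : Monotone fun t => f₂ (max t 0) := fun a b hab =>
      hf₂mono (Set.mem_Ici.2 (le_max_right a 0)) (Set.mem_Ici.2 (le_max_right b 0))
        (max_le_max hab le_rfl)
    have hrepr : f₂ = fun u => f₂ (max u 0) - f₂ (max (-u) 0) := by
      funext u
      rcases le_total 0 u with h | h
      · rw [max_eq_left h, max_eq_right (neg_nonpos.2 h), hf₂0, sub_zero]
      · rw [max_eq_right h, max_eq_left (neg_nonneg.2 h), hf₂0, hf₂odd u]; ring
    rw [hrepr]
    exact (hmono.measurable).sub (hmono.measurable.comp measurable_neg)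
  have hf₁abs : ∀ t, f₁ t = f₁ |t| := by
    intro t
    rcases le_total 0 t with h | h
    · rw [abs_of_nonneg h]
    · rw [abs_of_nonpos h]; exact (hf₁even t).symm
  -- V is integrable
  have hΦabs : ∀ t, Φ t = Φ |t| := by
    intro t
    rcases le_total 0 t with h | h
    · rw [abs_of_nonneg h]
    · rw [abs_of_nonpos h]; exact (hΦsymm t).symm
  have hΦmono : MonotoneOn Φ (Set.Ici (0:ℝ)) := even_convexOn_mono hΦconv hΦsymm
  have hbound : ∀ z, V x z ≤ Real.exp (m * (Φ r - ψ x)) + (f₁ r)⁻¹ * (V x z * f₁ (x+z)) := by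
    intro z
    rcases le_total |x+z| r with h | h
    · have h1 : V x z ≤ Real.exp (m * (Φ r - ψ x)) := by
        rw [hV]
        apply Real.exp_le_exp.2
        apply mul_le_mul_of_nonneg_left _ hm
        apply sub_le_sub_right
        rw [hΦabs (x+z)]
        exact hΦmono (Set.mem_Ici.2 (abs_nonneg _)) (Set.mem_Ici.2 hr0) h
      have h2 : 0 ≤ (f₁ r)⁻¹ * (V x z * f₁ (x+z)) :=
        mul_nonneg (inv_nonneg.2 (hf₁nonneg r)) (mul_nonneg (hVpos z).le (hf₁nonneg _))
      linarith
    · have h3 : f₁ r ≤ f₁ (x+z) := by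
        rw [hf₁abs (x+z)]
        exact hf₁mono (Set.mem_Ici.2 hr0) (Set.mem_Ici.2 (abs_nonneg _)) h
      have h4 : V x z ≤ (f₁ r)⁻¹ * (V x z * f₁ (x+z)) := by
        calc V x z = (f₁ r)⁻¹ * (V x z * f₁ r) := by field_simp
        _ ≤ (f₁ r)⁻¹ * (V x z * f₁ (x+z)) := mul_le_mul_of_nonneg_left
            (mul_le_mul_of_nonneg_left h3 (hVpos z).le) (inv_nonneg.2 (hf₁nonneg r))
      have h5 : 0 < Real.exp (m * (Φ r - ψ x)) := Real.exp_pos _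
      linarith
  have intV : Integrable (fun z => V x z) μ := by
    apply Integrable.mono'
      ((integrable_const (Real.exp (m * (Φ r - ψ x)))).add (((hint1 x)).const_mul (f₁ r)⁻¹))
      hVcont.aestronglyMeasurable
    filter_upwards with z
    rw [Real.norm_eq_abs, abs_of_nonneg (hVpos z).le]
    exact hbound z
  -- the total mass is 1
  have hM : ∫ z, V x z ∂μ = 1 := by
    rcases hm.eq_or_lt with hm0 | hm0
    · have : ∀ z, V x z = 1 := fun z => by rw [hV, ← hm0]; simp
      simp [this]
    · have hexpV : ∀ z, Real.exp (m * Φ (x+z)) = V x z * Real.exp (m * ψ x) := by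
        intro z
        rw [hV, ← Real.exp_add]
        congr 1
        ring
      have intI : Integrable (fun z => Real.exp (m * Φ (x+z))) μ := by
        apply (intV.mul_const (Real.exp (m * ψ x))).congr
        filter_upwards with z
        exact (hexpV z).symm
      have hI1 : (1:ℝ) ≤ ∫ z, Real.exp (m * Φ (x+z)) ∂μ := by
        calc (1:ℝ) = ∫ _, (1:ℝ) ∂μ := by simp
        _ ≤ _ := integral_mono (integrable_const 1) intI
              (fun z => Real.one_le_exp (mul_nonneg hm (hΦnonneg (x+z))))
      have hIpos : 0 < ∫ z, Real.exp (m * Φ (x+z)) ∂μ := lt_of_lt_of_le one_pos hI1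
      have hψx : ψ x = (1/m) * Real.log (∫ z, Real.exp (m * Φ (x+z)) ∂μ) := hψ x
      have hsplit : ∫ z, V x z ∂μ
          = (∫ z, Real.exp (m * Φ (x+z)) ∂μ) * Real.exp (-(m * ψ x)) := by
        rw [show (fun z => V x z) = fun z => Real.exp (m * Φ (x+z)) * Real.exp (-(m * ψ x))
          from funext fun z => by rw [hV, ← Real.exp_add]; congr 1; ring]
        exact integral_mul_const _ _
      rw [hsplit, hψx, show -(m * ((1/m) * Real.log (∫ z, Real.exp (m * Φ (x+z)) ∂μ)))
          = -Real.log (∫ z, Real.exp (m * Φ (x+z)) ∂μ) from by field_simp,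
        Real.exp_neg, Real.exp_log hIpos]
      field_simp
  -- reflection identities
  set E : ℝ → ℝ := fun z => Real.exp (-(2*x*(x+z))/(σ2:ℝ)) with hE_def
  have hEz : ∀ z : ℝ, Real.exp (-(2*x*(x+z))/(σ2:ℝ)) = E z := fun z => by rw [hE_def]
  have refl' : ∀ G : ℝ → ℝ, Measurable G → Integrable G μ →
      (∫ z, G z ∂μ = ∫ z, G (-(2*x) - z) * E z ∂μ) ∧
        Integrable (fun z => G (-(2*x) - z) * E z) μ := by
    intro G mG iG
    have h := gauss_reflect σ2 hσ2' x G mG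
    rw [← hμ] at h
    simp only [hEz] at h
    exact ⟨h.1, h.2 iG⟩
  have hshift : ∀ z : ℝ, x + (-(2*x) - z) = -(x+z) := fun z => by ring
  have hVrefl : ∀ z, V x (-(2*x) - z) = V x z := by
    intro z
    rw [hV, hV, hshift z, hΦsymm]
  -- reflection for V*f₁
  have R1 := refl' (fun z => V x z * f₁ (x + z)) (hVmeas.mul (mf₁.comp mshift)) (hint1 x)
  have hG1r : ∀ z, V x (-(2*x) - z) * f₁ (x + (-(2*x) - z)) = V x z * f₁ (x + z) := by
    intro z
    rw [hVrefl, hshift z, hf₁even]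
  have e1 : ∫ z, V x z * f₁ (x + z) * E z ∂μ = ∫ z, V x z * f₁ (x + z) ∂μ := by
    rw [R1.1]
    apply integral_congr_ae
    filter_upwards with z
    show V x z * f₁ (x + z) * E z = V x (-(2*x) - z) * f₁ (x + (-(2*x) - z)) * E z
    rw [hG1r z]
  have i1E : Integrable (fun z => V x z * f₁ (x + z) * E z) μ := by
    apply R1.2.congr
    filter_upwards with z
    show V x (-(2*x) - z) * f₁ (x + (-(2*x) - z)) * E z = V x z * f₁ (x + z) * E z
    rw [hG1r z]
  -- reflection for V*f₂
  have R2 := refl' (fun z => V x z * f₂ (x + z)) (hVmeas.mul (mf₂.comp mshift)) (hint2 x)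
  have hG2r : ∀ z, V x (-(2*x) - z) * f₂ (x + (-(2*x) - z)) = -(V x z * f₂ (x + z)) := by
    intro z
    rw [hVrefl, hshift z, hf₂odd]
    ring
  have e2 : ∫ z, V x z * f₂ (x + z) * E z ∂μ = -∫ z, V x z * f₂ (x + z) ∂μ := by
    have h' : ∫ z, V x (-(2*x) - z) * f₂ (x + (-(2*x) - z)) * E z ∂μ
        = ∫ z, -(V x z * f₂ (x + z) * E z) ∂μ := by
      apply integral_congr_ae
      filter_upwards with z
      rw [hG2r z]
      ring
    have h2 : ∫ z, V x z * f₂ (x + z) ∂μ = -∫ z, V x z * f₂ (x + z) * E z ∂μ := by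
      rw [R2.1]
      calc ∫ z, (fun z => V x z * f₂ (x + z)) (-(2*x) - z) * E z ∂μ
          = ∫ z, -(V x z * f₂ (x + z) * E z) ∂μ := h'
      _ = -∫ z, V x z * f₂ (x + z) * E z ∂μ := integral_neg _
    linarith
  have i2E : Integrable (fun z => V x z * f₂ (x + z) * E z) μ := by
    have h' : Integrable (fun z => -(V x z * f₂ (x + z) * E z)) μ := by
      apply R2.2.congr
      filter_upwards with z
      show V x (-(2*x) - z) * f₂ (x + (-(2*x) - z)) * E z = -(V x z * f₂ (x + z) * E z)
      rw [hG2r z]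
      ring
    exact h'.neg.congr (Filter.Eventually.of_forall fun z => by simp)
  -- reflection for V*f₁*f₂
  have R12 := refl' (fun z => V x z * f₁ (x + z) * f₂ (x + z))
    ((hVmeas.mul (mf₁.comp mshift)).mul (mf₂.comp mshift)) (hint x)
  have hG12r : ∀ z, V x (-(2*x) - z) * f₁ (x + (-(2*x) - z)) * f₂ (x + (-(2*x) - z))
      = -(V x z * f₁ (x + z) * f₂ (x + z)) := by
    intro z
    rw [hVrefl, hshift z, hf₁even, hf₂odd]
    ring
  have e12 : ∫ z, V x z * f₁ (x + z) * f₂ (x + z) * E z ∂μ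
      = -∫ z, V x z * f₁ (x + z) * f₂ (x + z) ∂μ := by
    have h' : ∫ z, V x (-(2*x) - z) * f₁ (x + (-(2*x) - z)) * f₂ (x + (-(2*x) - z)) * E z ∂μ
        = ∫ z, -(V x z * f₁ (x + z) * f₂ (x + z) * E z) ∂μ := by
      apply integral_congr_ae
      filter_upwards with z
      rw [hG12r z]
      ring
    have h2 : ∫ z, V x z * f₁ (x + z) * f₂ (x + z) ∂μ
        = -∫ z, V x z * f₁ (x + z) * f₂ (x + z) * E z ∂μ := by
      rw [R12.1]
      calc ∫ z, (fun z => V x z * f₁ (x + z) * f₂ (x + z)) (-(2*x) - z) * E z ∂μ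
          = ∫ z, -(V x z * f₁ (x + z) * f₂ (x + z) * E z) ∂μ := h'
      _ = -∫ z, V x z * f₁ (x + z) * f₂ (x + z) * E z ∂μ := integral_neg _
    linarith
  have i12E : Integrable (fun z => V x z * f₁ (x + z) * f₂ (x + z) * E z) μ := by
    have h' : Integrable (fun z => -(V x z * f₁ (x + z) * f₂ (x + z) * E z)) μ := by
      apply R12.2.congr
      filter_upwards with z
      show V x (-(2*x) - z) * f₁ (x + (-(2*x) - z)) * f₂ (x + (-(2*x) - z)) * E z
        = -(V x z * f₁ (x + z) * f₂ (x + z) * E z)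
      rw [hG12r z]
      ring
    exact h'.neg.congr (Filter.Eventually.of_forall fun z => by simp)
  -- reflection for V
  have R0 := refl' (fun z => V x z) hVmeas intV
  have e0 : ∫ z, V x z * E z ∂μ = 1 := by
    rw [← hM, R0.1]
    apply integral_congr_ae
    filter_upwards with z
    show V x z * E z = V x (-(2*x) - z) * E z
    rw [hVrefl]
  have i0E : Integrable (fun z => V x z * E z) μ := by
    apply R0.2.congr
    filter_upwards with z
    show V x (-(2*x) - z) * E z = V x z * E z
    rw [hVrefl]
  -- expansion of integrals of linear combinations
  have expand : ∀ c₁ c₂ c₃ c₄ c₅ c₆ c₇ c₈ : ℝ,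
      ∫ z, (c₁ * (V x z * f₁ (x + z) * f₂ (x + z))
        + c₂ * (V x z * f₁ (x + z) * f₂ (x + z) * E z)
        + c₃ * (V x z * f₁ (x + z)) + c₄ * (V x z * f₁ (x + z) * E z)
        + c₅ * (V x z * f₂ (x + z)) + c₆ * (V x z * f₂ (x + z) * E z)
        + c₇ * V x z + c₈ * (V x z * E z)) ∂μ
      = c₁ * (∫ z, V x z * f₁ (x + z) * f₂ (x + z) ∂μ)
        + c₂ * (-(∫ z, V x z * f₁ (x + z) * f₂ (x + z) ∂μ))
        + c₃ * (∫ z, V x z * f₁ (x + z) ∂μ) + c₄ * (∫ z, V x z * f₁ (x + z) ∂μ)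
        + c₅ * (∫ z, V x z * f₂ (x + z) ∂μ) + c₆ * (-(∫ z, V x z * f₂ (x + z) ∂μ))
        + c₇ + c₈ := by
    intro c₁ c₂ c₃ c₄ c₅ c₆ c₇ c₈
    have I1 : Integrable (fun z => c₁ * (V x z * f₁ (x + z) * f₂ (x + z))) μ := (hint x).const_mul c₁
    have I2 : Integrable (fun z => c₂ * (V x z * f₁ (x + z) * f₂ (x + z) * E z)) μ := i12E.const_mul c₂
    have I3 : Integrable (fun z => c₃ * (V x z * f₁ (x + z))) μ := (hint1 x).const_mul c₃
    have I4 : Integrable (fun z => c₄ * (V x z * f₁ (x + z) * E z)) μ := i1E.const_mul c₄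
    have I5 : Integrable (fun z => c₅ * (V x z * f₂ (x + z))) μ := (hint2 x).const_mul c₅
    have I6 : Integrable (fun z => c₆ * (V x z * f₂ (x + z) * E z)) μ := i2E.const_mul c₆
    have I7 : Integrable (fun z => c₇ * V x z) μ := intV.const_mul c₇
    have I8 : Integrable (fun z => c₈ * (V x z * E z)) μ := i0E.const_mul c₈
    have S2 : Integrable (fun z => c₁ * (V x z * f₁ (x + z) * f₂ (x + z))
        + c₂ * (V x z * f₁ (x + z) * f₂ (x + z) * E z)) μ := I1.add I2
    have S3 : Integrable (fun z => c₁ * (V x z * f₁ (x + z) * f₂ (x + z))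
        + c₂ * (V x z * f₁ (x + z) * f₂ (x + z) * E z)
        + c₃ * (V x z * f₁ (x + z))) μ := S2.add I3
    have S4 : Integrable (fun z => c₁ * (V x z * f₁ (x + z) * f₂ (x + z))
        + c₂ * (V x z * f₁ (x + z) * f₂ (x + z) * E z)
        + c₃ * (V x z * f₁ (x + z))
        + c₄ * (V x z * f₁ (x + z) * E z)) μ := S3.add I4
    have S5 : Integrable (fun z => c₁ * (V x z * f₁ (x + z) * f₂ (x + z))
        + c₂ * (V x z * f₁ (x + z) * f₂ (x + z) * E z)
        + c₃ * (V x z * f₁ (x + z))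
        + c₄ * (V x z * f₁ (x + z) * E z)
        + c₅ * (V x z * f₂ (x + z))) μ := S4.add I5
    have S6 : Integrable (fun z => c₁ * (V x z * f₁ (x + z) * f₂ (x + z))
        + c₂ * (V x z * f₁ (x + z) * f₂ (x + z) * E z)
        + c₃ * (V x z * f₁ (x + z))
        + c₄ * (V x z * f₁ (x + z) * E z)
        + c₅ * (V x z * f₂ (x + z))
        + c₆ * (V x z * f₂ (x + z) * E z)) μ := S5.add I6
    have S7 : Integrable (fun z => c₁ * (V x z * f₁ (x + z) * f₂ (x + z))
        + c₂ * (V x z * f₁ (x + z) * f₂ (x + z) * E z)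
        + c₃ * (V x z * f₁ (x + z))
        + c₄ * (V x z * f₁ (x + z) * E z)
        + c₅ * (V x z * f₂ (x + z))
        + c₆ * (V x z * f₂ (x + z) * E z)
        + c₇ * V x z) μ := S6.add I7
    rw [integral_add S7 I8, integral_add S6 I7, integral_add S5 I6, integral_add S4 I5,
      integral_add S3 I4, integral_add S2 I3, integral_add I1 I2,
      integral_const_mul, integral_const_mul, integral_const_mul, integral_const_mul,
      integral_const_mul, integral_const_mul, integral_const_mul, integral_const_mul,
      e12, e1, e2, e0, hM]
    ring
  -- the core pointwise inequality
  have h2x : (0:ℝ) ≤ (2*x)/(σ2:ℝ) := by positivity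
  have hcneg : -(2*x)/(σ2:ℝ) ≤ 0 := by rw [neg_div]; linarith
  have hEc : ∀ z : ℝ, E z = Real.exp ((-(2*x)/(σ2:ℝ)) * (x + z)) := by
    intro z
    have harg : -(2*x*(x+z))/(σ2:ℝ) = (-(2*x)/(σ2:ℝ)) * (x + z) := by ring
    simp only [hE_def]
    rw [harg]
  have core' : ∀ w z : ℝ, 0 ≤ (f₁ (x+z) - f₁ (x+w)) *
      (f₂ (x+z) * (1 - E z) * (1 + E w) - f₂ (x+w) * (1 - E w) * (1 + E z)) := by
    intro w z
    rw [hEc z, hEc w]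
    exact core_pointwise hf₁even hf₁mono hf₂odd hf₂mono hcneg (x+z) (x+w)
  -- inner integral nonnegativity
  have key : ∀ w : ℝ, 0 ≤
      2*(∫ z, V x z * f₁ (x + z) * f₂ (x + z) ∂μ)*(1 + E w)
      - 2*(∫ z, V x z * f₁ (x + z) ∂μ)*(f₂ (x+w)*(1 - E w))
      - 2*(∫ z, V x z * f₂ (x + z) ∂μ)*(f₁ (x+w)*(1 + E w))
      + 2*(f₁ (x+w)*(f₂ (x+w)*(1 - E w))) := by
    intro w
    have h0 : 0 ≤ ∫ z, (f₁ (x+z) - f₁ (x+w)) *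
        (f₂ (x+z) * (1 - E z) * (1 + E w) - f₂ (x+w) * (1 - E w) * (1 + E z)) * V x z ∂μ :=
      integral_nonneg fun z => mul_nonneg (core' w z) (hVpos z).le
    have h1 : (fun z => (f₁ (x+z) - f₁ (x+w)) *
        (f₂ (x+z) * (1 - E z) * (1 + E w) - f₂ (x+w) * (1 - E w) * (1 + E z)) * V x z)
        = fun z => (1 + E w) * (V x z * f₁ (x + z) * f₂ (x + z))
          + (-(1 + E w)) * (V x z * f₁ (x + z) * f₂ (x + z) * E z)
          + (-(f₂ (x+w) * (1 - E w))) * (V x z * f₁ (x + z))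
          + (-(f₂ (x+w) * (1 - E w))) * (V x z * f₁ (x + z) * E z)
          + (-(f₁ (x+w) * (1 + E w))) * (V x z * f₂ (x + z))
          + (f₁ (x+w) * (1 + E w)) * (V x z * f₂ (x + z) * E z)
          + (f₁ (x+w) * (f₂ (x+w) * (1 - E w))) * V x z
          + (f₁ (x+w) * (f₂ (x+w) * (1 - E w))) * (V x z * E z) := by
      funext z
      ring
    rw [h1, expand (1 + E w) (-(1 + E w)) (-(f₂ (x+w) * (1 - E w))) (-(f₂ (x+w) * (1 - E w)))
      (-(f₁ (x+w) * (1 + E w))) (f₁ (x+w) * (1 + E w)) (f₁ (x+w) * (f₂ (x+w) * (1 - E w)))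
      (f₁ (x+w) * (f₂ (x+w) * (1 - E w)))] at h0
    nlinarith [h0]
  -- outer integration
  have hfin0 : 0 ≤ ∫ w, (2*(∫ z, V x z * f₁ (x + z) * f₂ (x + z) ∂μ)*(1 + E w)
      - 2*(∫ z, V x z * f₁ (x + z) ∂μ)*(f₂ (x+w)*(1 - E w))
      - 2*(∫ z, V x z * f₂ (x + z) ∂μ)*(f₁ (x+w)*(1 + E w))
      + 2*(f₁ (x+w)*(f₂ (x+w)*(1 - E w)))) * V x w ∂μ :=
    integral_nonneg fun w => mul_nonneg (key w) (hVpos w).le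
  have hfun : (fun w => (2*(∫ z, V x z * f₁ (x + z) * f₂ (x + z) ∂μ)*(1 + E w)
      - 2*(∫ z, V x z * f₁ (x + z) ∂μ)*(f₂ (x+w)*(1 - E w))
      - 2*(∫ z, V x z * f₂ (x + z) ∂μ)*(f₁ (x+w)*(1 + E w))
      + 2*(f₁ (x+w)*(f₂ (x+w)*(1 - E w)))) * V x w)
      = fun w => 2 * (V x w * f₁ (x + w) * f₂ (x + w))
        + (-2) * (V x w * f₁ (x + w) * f₂ (x + w) * E w)
        + (-(2*(∫ z, V x z * f₂ (x + z) ∂μ))) * (V x w * f₁ (x + w))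
        + (-(2*(∫ z, V x z * f₂ (x + z) ∂μ))) * (V x w * f₁ (x + w) * E w)
        + (-(2*(∫ z, V x z * f₁ (x + z) ∂μ))) * (V x w * f₂ (x + w))
        + (2*(∫ z, V x z * f₁ (x + z) ∂μ)) * (V x w * f₂ (x + w) * E w)
        + (2*(∫ z, V x z * f₁ (x + z) * f₂ (x + z) ∂μ)) * V x w
        + (2*(∫ z, V x z * f₁ (x + z) * f₂ (x + z) ∂μ)) * (V x w * E w) := by
    funext w
    ring
  rw [hfun, expand 2 (-2) (-(2*(∫ z, V x z * f₂ (x + z) ∂μ)))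
    (-(2*(∫ z, V x z * f₂ (x + z) ∂μ))) (-(2*(∫ z, V x z * f₁ (x + z) ∂μ)))
    (2*(∫ z, V x z * f₁ (x + z) ∂μ)) (2*(∫ z, V x z * f₁ (x + z) * f₂ (x + z) ∂μ))
    (2*(∫ z, V x z * f₁ (x + z) * f₂ (x + z) ∂μ))] at hfin0
  nlinarith [hfin0]
end

section
/- If f ∈ 𝒞 (nonnegative, even, nondecreasing on [0,∞)), then the function x ↦ E[V(x,z) f(x+z)] is also in 𝒞, where V(x,z) = exp(m(Φ̃(x+z) - ψ(x))) is the Gibbs change of density associated with a convex symmetric Φ̃. -/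
open MeasureTheory ProbabilityTheory Real
open scoped ENNReal NNReal

private lemma cosh_mul_cosh_le {a b u v : ℝ} (ha : 0 ≤ a) (hab : a ≤ b)
    (hv : 0 ≤ v) (hvu : v ≤ u) :
    cosh (a*u) * cosh (b*v) ≤ cosh (b*u) * cosh (a*v) := by
  have h1 : 2 * (cosh (a*u) * cosh (b*v)) = cosh (a*u + b*v) + cosh (a*u - b*v) := by
    rw [Real.cosh_add, Real.cosh_sub]; ring
  have h2 : 2 * (cosh (b*u) * cosh (a*v)) = cosh (b*u + a*v) + cosh (b*u - a*v) := by
    rw [Real.cosh_add, Real.cosh_sub]; ring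
  have hu : 0 ≤ u := le_trans hv hvu
  have k1 : cosh (a*u + b*v) ≤ cosh (b*u + a*v) := by
    rw [Real.cosh_le_cosh]
    have hb : 0 ≤ b := ha.trans hab
    rw [abs_of_nonneg (by nlinarith [mul_nonneg ha hu, mul_nonneg hb hv]),
      abs_of_nonneg (by nlinarith [mul_nonneg hb hu, mul_nonneg ha hv])]
    nlinarith
  have k2 : cosh (a*u - b*v) ≤ cosh (b*u - a*v) := by
    rw [Real.cosh_le_cosh]
    have h3 : |a*u - b*v| ≤ b*u - a*v := abs_le.2 ⟨by nlinarith, by nlinarith⟩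
    rwa [abs_of_nonneg (le_trans (abs_nonneg _) h3)]
  linarith

/-- The symmetrized (folded) Gaussian density with location `±x`. -/
private noncomputable def sden (σ2 : NNReal) (x u : ℝ) : ℝ :=
  (Real.sqrt (2*π*σ2))⁻¹ * Real.exp (-(u^2+x^2)/(2*σ2)) * Real.cosh (u*x/σ2)

private lemma sden_pos {σ2 : NNReal} (hσ2 : 0 < σ2) (x u : ℝ) : 0 < sden σ2 x u := by
  have h : (0:ℝ) < σ2 := hσ2
  have : (0:ℝ) < Real.sqrt (2*π*σ2) := Real.sqrt_pos.2 (by positivity)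
  unfold sden
  positivity

private lemma sden_meas (σ2 : NNReal) (x : ℝ) : Measurable (sden σ2 x) := by
  unfold sden; fun_prop

private lemma gaussianPDFReal_add_symm {σ2 : NNReal} (hσ2 : 0 < σ2) (x u : ℝ) :
    gaussianPDFReal x σ2 u + gaussianPDFReal (-x) σ2 u = 2 * sden σ2 x u := by
  have h : (0:ℝ) < σ2 := hσ2
  unfold gaussianPDFReal sden
  rw [Real.cosh_eq]
  have e1 : -(u - x)^2 / (2*(σ2:ℝ)) = -(u^2+x^2)/(2*σ2) + u*x/σ2 := by
    field_simp; ring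
  have e2 : -(u - (-x))^2 / (2*(σ2:ℝ)) = -(u^2+x^2)/(2*σ2) + -(u*x/σ2) := by
    field_simp; ring
  rw [e1, e2, Real.exp_add, Real.exp_add]
  ring

private lemma sden_cmp {σ2 : NNReal} (hσ2 : 0 < σ2) {x y u v : ℝ} (hx : 0 ≤ x) (hxy : x ≤ y)
    (hvu : |v| ≤ |u|) :
    sden σ2 y v * sden σ2 x u ≤ sden σ2 y u * sden σ2 x v := by
  have hσ : (0:ℝ) < σ2 := hσ2
  have hx' : 0 ≤ x / (σ2:ℝ) := div_nonneg hx hσ.le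
  have hy' : 0 ≤ y / (σ2:ℝ) := div_nonneg (hx.trans hxy) hσ.le
  have hxy' : x / (σ2:ℝ) ≤ y / σ2 := by gcongr
  have key := cosh_mul_cosh_le hx' hxy' (abs_nonneg v) hvu
  have crw : ∀ t s : ℝ, 0 ≤ s / (σ2:ℝ) → Real.cosh (s/σ2 * |t|) = Real.cosh (t * s / σ2) := by
    intro t s hs
    rw [← Real.cosh_abs (t * s / σ2)]
    congr 1
    rw [mul_div_assoc, abs_mul, abs_of_nonneg hs, mul_comm]
  rw [crw u x hx', crw v y hy', crw u y hy', crw v x hx'] at key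
  have hE : Real.exp (-(v^2+y^2)/(2*(σ2:ℝ))) * Real.exp (-(u^2+x^2)/(2*(σ2:ℝ)))
      = Real.exp (-(u^2+y^2)/(2*(σ2:ℝ))) * Real.exp (-(v^2+x^2)/(2*(σ2:ℝ))) := by
    rw [← Real.exp_add, ← Real.exp_add]; congr 1; ring
  have hC : (0:ℝ) < (Real.sqrt (2*π*σ2))⁻¹ := by
    rw [inv_pos]; exact Real.sqrt_pos.2 (by positivity)
  unfold sden
  calc (Real.sqrt (2*π*σ2))⁻¹ * Real.exp (-(v^2+y^2)/(2*(σ2:ℝ))) * Real.cosh (v*y/σ2)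
      * ((Real.sqrt (2*π*σ2))⁻¹ * Real.exp (-(u^2+x^2)/(2*(σ2:ℝ))) * Real.cosh (u*x/σ2))
      = ((Real.sqrt (2*π*σ2))⁻¹ * (Real.sqrt (2*π*σ2))⁻¹
        * (Real.exp (-(v^2+y^2)/(2*(σ2:ℝ))) * Real.exp (-(u^2+x^2)/(2*(σ2:ℝ)))))
        * (Real.cosh (u*x/σ2) * Real.cosh (v*y/σ2)) := by ring
    _ = ((Real.sqrt (2*π*σ2))⁻¹ * (Real.sqrt (2*π*σ2))⁻¹
        * (Real.exp (-(u^2+y^2)/(2*(σ2:ℝ))) * Real.exp (-(v^2+x^2)/(2*(σ2:ℝ)))))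
        * (Real.cosh (u*x/σ2) * Real.cosh (v*y/σ2)) := by rw [hE]
    _ ≤ ((Real.sqrt (2*π*σ2))⁻¹ * (Real.sqrt (2*π*σ2))⁻¹
        * (Real.exp (-(u^2+y^2)/(2*(σ2:ℝ))) * Real.exp (-(v^2+x^2)/(2*(σ2:ℝ)))))
        * (Real.cosh (u*y/σ2) * Real.cosh (v*x/σ2)) := by
        apply mul_le_mul_of_nonneg_left key (by positivity)
    _ = (Real.sqrt (2*π*σ2))⁻¹ * Real.exp (-(u^2+y^2)/(2*(σ2:ℝ))) * Real.cosh (u*y/σ2)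
      * ((Real.sqrt (2*π*σ2))⁻¹ * Real.exp (-(v^2+x^2)/(2*(σ2:ℝ))) * Real.cosh (v*x/σ2)) := by
        ring

private lemma sden_le {σ2 : NNReal} (hσ2 : 0 < σ2) {x y : ℝ} (hx : 0 ≤ x) (hxy : x ≤ y) (u : ℝ) :
    sden σ2 x u ≤ Real.exp ((y^2-x^2)/(2*σ2)) * sden σ2 y u := by
  have hσ : (0:ℝ) < σ2 := hσ2
  have hch : Real.cosh (u*x/σ2) ≤ Real.cosh (u*y/σ2) := by
    rw [Real.cosh_le_cosh]
    rw [abs_div, abs_div, abs_mul, abs_mul]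
    have hxy' : |x| ≤ |y| := by
      rw [abs_of_nonneg hx, abs_of_nonneg (hx.trans hxy)]; exact hxy
    gcongr
  have hE : Real.exp ((y^2-x^2)/(2*(σ2:ℝ))) * Real.exp (-(u^2+y^2)/(2*(σ2:ℝ)))
      = Real.exp (-(u^2+x^2)/(2*(σ2:ℝ))) := by
    rw [← Real.exp_add]; congr 1; ring
  have hC : (0:ℝ) < (Real.sqrt (2*π*σ2))⁻¹ := by
    rw [inv_pos]; exact Real.sqrt_pos.2 (by positivity)
  unfold sden
  calc (Real.sqrt (2*π*σ2))⁻¹ * Real.exp (-(u^2+x^2)/(2*(σ2:ℝ))) * Real.cosh (u*x/σ2)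
      ≤ (Real.sqrt (2*π*σ2))⁻¹ * Real.exp (-(u^2+x^2)/(2*(σ2:ℝ))) * Real.cosh (u*y/σ2) := by
        apply mul_le_mul_of_nonneg_left hch (by positivity)
    _ = Real.exp ((y^2-x^2)/(2*(σ2:ℝ)))
        * ((Real.sqrt (2*π*σ2))⁻¹ * Real.exp (-(u^2+y^2)/(2*(σ2:ℝ))) * Real.cosh (u*y/σ2)) := by
        rw [← hE]; ring

private lemma transfer_q {σ2 : NNReal} (hσ2 : 0 < σ2) (h : ℝ → ℝ) (x : ℝ) :
    (Integrable (fun z => h (x+z)) (gaussianReal 0 σ2) ↔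
      Integrable (fun u => h u * gaussianPDFReal x σ2 u)) ∧
    (∫ z, h (x+z) ∂(gaussianReal 0 σ2)) = ∫ u, h u * gaussianPDFReal x σ2 u := by
  have hmap : (gaussianReal 0 σ2).map (· + x) = gaussianReal x σ2 := by
    rw [gaussianReal_map_add_const]; simp
  have he := measurableEmbedding_addRight x
  have hfun : (fun z => h (x + z)) = fun z => h (z + x) := by
    funext z; rw [add_comm]
  have hgr : gaussianReal x σ2 =
      volume.withDensity (fun u => ((gaussianPDFReal x σ2 u).toNNReal : ℝ≥0∞)) := by
    rw [gaussianReal_of_var_ne_zero _ hσ2.ne', gaussianPDF_def]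
    rfl
  have hmeasq : Measurable fun u => (gaussianPDFReal x σ2 u).toNNReal :=
    (measurable_gaussianPDFReal x σ2).real_toNNReal
  have hsmul : (fun u => (gaussianPDFReal x σ2 u).toNNReal • h u)
      = fun u => h u * gaussianPDFReal x σ2 u := by
    funext u
    rw [NNReal.smul_def, Real.coe_toNNReal _ (gaussianPDFReal_nonneg x σ2 u), smul_eq_mul,
      mul_comm]
  constructor
  · rw [hfun]
    rw [show (fun z => h (z + x)) = (h ∘ fun z => z + x) from rfl, ← he.integrable_map_iff,
      hmap, hgr, integrable_withDensity_iff_integrable_smul hmeasq, hsmul]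
  · rw [hfun, ← he.integral_map (g := h), hmap, hgr,
      integral_withDensity_eq_integral_smul hmeasq, hsmul]

private lemma transfer_s {σ2 : NNReal} (hσ2 : 0 < σ2) (h : ℝ → ℝ) (hmeas : Measurable h)
    (hnn : ∀ u, 0 ≤ h u) (heven : ∀ u, h (-u) = h u) (x : ℝ) :
    (Integrable (fun z => h (x+z)) (gaussianReal 0 σ2) ↔
      Integrable (fun u => h u * sden σ2 x u)) ∧
    (∫ z, h (x+z) ∂(gaussianReal 0 σ2)) = ∫ u, h u * sden σ2 x u := by
  obtain ⟨hi, he⟩ := transfer_q hσ2 h x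
  have hqneg : ∀ y u, gaussianPDFReal (-y) σ2 u = gaussianPDFReal y σ2 (-u) := by
    intro y u; unfold gaussianPDFReal; ring_nf
  have hfneg : ∀ y, (fun u => h u * gaussianPDFReal (-y) σ2 u)
      = fun u => (fun w => h w * gaussianPDFReal y σ2 w) (-u) := by
    intro y; funext u; simp only []
    rw [hqneg y u, heven u]
  have hIneg : Integrable (fun u => h u * gaussianPDFReal x σ2 u) →
      Integrable (fun u => h u * gaussianPDFReal (-x) σ2 u) := by
    intro hI
    rw [hfneg x]
    exact hI.comp_neg
  have hsform : (fun u => h u * sden σ2 x u) = fun u =>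
      (h u * gaussianPDFReal x σ2 u + h u * gaussianPDFReal (-x) σ2 u) / 2 := by
    funext u
    have := gaussianPDFReal_add_symm hσ2 x u
    linear_combination (-(h u) / 2) * this
  have hiff : Integrable (fun u => h u * gaussianPDFReal x σ2 u) ↔
      Integrable (fun u => h u * sden σ2 x u) := by
    constructor
    · intro hI
      rw [hsform]
      exact (hI.add (hIneg hI)).div_const 2
    · intro hS
      refine (hS.const_mul 2).mono
        ((hmeas.mul (measurable_gaussianPDFReal x σ2)).aestronglyMeasurable) ?_
      refine Filter.Eventually.of_forall fun u => ?_
      have h1 : 0 ≤ h u * gaussianPDFReal x σ2 u :=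
        mul_nonneg (hnn u) (gaussianPDFReal_nonneg x σ2 u)
      have h2 : gaussianPDFReal x σ2 u ≤ 2 * sden σ2 x u := by
        have := gaussianPDFReal_add_symm hσ2 x u
        nlinarith [gaussianPDFReal_nonneg (-x) σ2 u]
      have h3 : h u * gaussianPDFReal x σ2 u ≤ 2 * (h u * sden σ2 x u) := by
        nlinarith [hnn u]
      rw [Real.norm_eq_abs, Real.norm_eq_abs, abs_of_nonneg h1]
      exact h3.trans (le_abs_self _)
  constructor
  · rw [hi, hiff]
  · rw [he]
    by_cases hI : Integrable (fun u => h u * gaussianPDFReal x σ2 u)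
    · have hIn := hIneg hI
      rw [hsform]
      rw [integral_div, integral_add hI hIn]
      have : ∫ u, h u * gaussianPDFReal (-x) σ2 u = ∫ u, h u * gaussianPDFReal x σ2 u := by
        rw [hfneg x]
        simpa using integral_neg_eq_self (fun w => h w * gaussianPDFReal x σ2 w)
          (volume : Measure ℝ)
      rw [this]
      ring
    · rw [integral_undef hI, integral_undef (fun hS => hI (hiff.2 hS))]

private lemma cheb (w F R : ℝ → ℝ)
    (hcm : ∀ u v, 0 ≤ (F u - F v) * (R u - R v)) (hwnn : ∀ u, 0 ≤ w u)
    (hIw : Integrable w) (hIF : Integrable (fun u => F u * w u))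
    (hIR : Integrable (fun u => R u * w u))
    (hIFR : Integrable (fun u => F u * R u * w u)) :
    (∫ u, F u * w u) * (∫ u, R u * w u) ≤ (∫ u, F u * R u * w u) * (∫ u, w u) := by
  have hA : Integrable (fun p : ℝ × ℝ => (F p.1 * R p.1 * w p.1) * w p.2)
      ((volume : Measure ℝ).prod volume) := hIFR.mul_prod hIw
  have hB : Integrable (fun p : ℝ × ℝ => w p.1 * (F p.2 * R p.2 * w p.2))
      ((volume : Measure ℝ).prod volume) := hIw.mul_prod hIFR
  have hC : Integrable (fun p : ℝ × ℝ => (F p.1 * w p.1) * (R p.2 * w p.2))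
      ((volume : Measure ℝ).prod volume) := hIF.mul_prod hIR
  have hD : Integrable (fun p : ℝ × ℝ => (R p.1 * w p.1) * (F p.2 * w p.2))
      ((volume : Measure ℝ).prod volume) := hIR.mul_prod hIF
  have key : 0 ≤ ∫ p : ℝ × ℝ, ((F p.1 - F p.2) * (R p.1 - R p.2)) * (w p.1 * w p.2)
      ∂((volume : Measure ℝ).prod volume) :=
    integral_nonneg fun p => mul_nonneg (hcm p.1 p.2) (mul_nonneg (hwnn _) (hwnn _))
  have hexp : (fun p : ℝ × ℝ => ((F p.1 - F p.2) * (R p.1 - R p.2)) * (w p.1 * w p.2))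
      = fun p : ℝ × ℝ => ((F p.1 * R p.1 * w p.1) * w p.2 + w p.1 * (F p.2 * R p.2 * w p.2))
        - ((F p.1 * w p.1) * (R p.2 * w p.2) + (R p.1 * w p.1) * (F p.2 * w p.2)) := by
    funext p; ring
  have hAB : Integrable (fun p : ℝ × ℝ => (F p.1 * R p.1 * w p.1) * w p.2
      + w p.1 * (F p.2 * R p.2 * w p.2)) ((volume : Measure ℝ).prod volume) := hA.add hB
  have hCD : Integrable (fun p : ℝ × ℝ => (F p.1 * w p.1) * (R p.2 * w p.2)
      + (R p.1 * w p.1) * (F p.2 * w p.2)) ((volume : Measure ℝ).prod volume) := hC.add hD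
  rw [hexp, integral_sub hAB hCD, integral_add hA hB, integral_add hC hD] at key
  have eA : ∫ p : ℝ × ℝ, (F p.1 * R p.1 * w p.1) * w p.2 ∂((volume : Measure ℝ).prod volume)
      = (∫ u, F u * R u * w u) * ∫ u, w u := integral_prod_mul (fun u => F u * R u * w u) w
  have eB : ∫ p : ℝ × ℝ, w p.1 * (F p.2 * R p.2 * w p.2) ∂((volume : Measure ℝ).prod volume)
      = (∫ u, w u) * ∫ u, F u * R u * w u :=
    integral_prod_mul w (fun u => F u * R u * w u)
  have eC : ∫ p : ℝ × ℝ, (F p.1 * w p.1) * (R p.2 * w p.2) ∂((volume : Measure ℝ).prod volume)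
      = (∫ u, F u * w u) * ∫ u, R u * w u :=
    integral_prod_mul (fun u => F u * w u) (fun u => R u * w u)
  have eD : ∫ p : ℝ × ℝ, (R p.1 * w p.1) * (F p.2 * w p.2) ∂((volume : Measure ℝ).prod volume)
      = (∫ u, R u * w u) * ∫ u, F u * w u :=
    integral_prod_mul (fun u => R u * w u) (fun u => F u * w u)
  rw [eA, eB, eC, eD] at key
  nlinarith [key]

/-- Lemma 2(d): the class `𝒞` (nonnegative, even, nondecreasing
on `[0,∞)`) is preserved by the tilted Gaussian smoothing operator
`f ↦ (x ↦ E[V(x,z) f(x+z)])`. -/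
theorem gibbs_preserves_C
    (Φ : ℝ → ℝ) (hΦsmooth : ContDiff ℝ (⊤ : ℕ∞) Φ)
    (hΦconv : ConvexOn ℝ Set.univ Φ)
    (hΦsymm : ∀ x, Φ (-x) = Φ x) (hΦnonneg : ∀ x, 0 ≤ Φ x)
    (σ2 : NNReal) (hσ2 : 0 < σ2) (m : ℝ) (hm : 0 ≤ m)
    (f : ℝ → ℝ) (hfnonneg : ∀ x, 0 ≤ f x) (hfeven : ∀ x, f (-x) = f x)
    (hfmono : MonotoneOn f (Set.Ici (0 : ℝ)))
    (ψ : ℝ → ℝ)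
    (hψ : ∀ x, ψ x = (1 / m) *
      Real.log (∫ z, Real.exp (m * Φ (x + z)) ∂(gaussianReal 0 σ2)))
    (V : ℝ → ℝ → ℝ)
    (hV : ∀ x z, V x z = Real.exp (m * (Φ (x + z) - ψ x)))
    (hint : ∀ x, Integrable (fun z => V x z * f (x + z)) (gaussianReal 0 σ2))
    (g : ℝ → ℝ)
    (hg : ∀ x, g x = ∫ z, V x z * f (x + z) ∂(gaussianReal 0 σ2)) :
    (∀ x, 0 ≤ g x) ∧ (∀ x, g (-x) = g x) ∧ MonotoneOn g (Set.Ici (0 : ℝ)) := by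
  -- basic abbreviations and facts
  have hfabs : ∀ u : ℝ, f |u| = f u := by
    intro u
    rcases le_or_gt 0 u with h | h
    · rw [abs_of_nonneg h]
    · rw [abs_of_neg h]; exact hfeven u
  have habsf : ∀ u v : ℝ, |v| ≤ |u| → f v ≤ f u := by
    intro u v h
    rw [← hfabs u, ← hfabs v]
    exact hfmono (Set.mem_Ici.2 (abs_nonneg v)) (Set.mem_Ici.2 (abs_nonneg u)) h
  have hmeasf : Measurable f := by
    have hmono : Monotone fun t => f (max t 0) := fun s t hst =>
      hfmono (Set.mem_Ici.2 (le_max_right _ _)) (Set.mem_Ici.2 (le_max_right _ _))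
        (max_le_max hst le_rfl)
    have : f = (fun t => f (max t 0)) ∘ (fun u : ℝ => |u|) := by
      funext u
      have : max |u| 0 = |u| := max_eq_left (abs_nonneg u)
      simp only [Function.comp_apply, this, hfabs u]
    rw [this]
    exact hmono.measurable.comp measurable_abs
  have hΦabs : ∀ u v : ℝ, |v| ≤ |u| → Φ v ≤ Φ u := by
    have h1 : ∀ a b : ℝ, 0 ≤ a → a ≤ b → Φ a ≤ Φ b := by
      intro a b h0 hab
      have hseg : a ∈ segment ℝ (-b) b := by
        rw [segment_eq_Icc (by linarith : -b ≤ b)]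
        exact ⟨by linarith, hab⟩
      have := hΦconv.le_on_segment (Set.mem_univ (-b)) (Set.mem_univ b) hseg
      rwa [hΦsymm b, max_self] at this
    have hΦa : ∀ t : ℝ, Φ |t| = Φ t := by
      intro t
      rcases le_or_gt 0 t with h | h
      · rw [abs_of_nonneg h]
      · rw [abs_of_neg h]; exact hΦsymm t
    intro u v h
    rw [← hΦa u, ← hΦa v]
    exact h1 _ _ (abs_nonneg v) h
  have hWmeas : Measurable fun u => Real.exp (m * Φ u) :=
    (measurable_const.mul hΦsmooth.continuous.measurable).exp
  have hWnn : ∀ u : ℝ, 0 ≤ Real.exp (m * Φ u) := fun u => (Real.exp_pos _).le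
  have hW1 : ∀ u : ℝ, 1 ≤ Real.exp (m * Φ u) := by
    intro u
    rw [show (1:ℝ) = Real.exp 0 from (Real.exp_zero).symm]
    exact Real.exp_le_exp.2 (mul_nonneg hm (hΦnonneg u))
  have hWeven : ∀ u : ℝ, Real.exp (m * Φ (-u)) = Real.exp (m * Φ u) := by
    intro u; rw [hΦsymm]
  have habsW : ∀ u v : ℝ, |v| ≤ |u| → Real.exp (m * Φ v) ≤ Real.exp (m * Φ u) := by
    intro u v h
    exact Real.exp_le_exp.2 (mul_le_mul_of_nonneg_left (hΦabs u v h) hm)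
  have hHmeas : Measurable fun u => Real.exp (m * Φ u) * f u := hWmeas.mul hmeasf
  have hHnn : ∀ u : ℝ, 0 ≤ Real.exp (m * Φ u) * f u :=
    fun u => mul_nonneg (hWnn u) (hfnonneg u)
  have hHeven : ∀ u : ℝ, Real.exp (m * Φ (-u)) * f (-u) = Real.exp (m * Φ u) * f u := by
    intro u; rw [hΦsymm, hfeven]
  have habsH : ∀ u v : ℝ, |v| ≤ |u| →
      Real.exp (m * Φ v) * f v ≤ Real.exp (m * Φ u) * f u := by
    intro u v h
    exact mul_le_mul (habsW u v h) (habsf u v h) (hfnonneg v) (hWnn u)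
  have hcpos : ∀ t : ℝ, 0 < Real.exp (m * ψ t) := fun t => Real.exp_pos _
  have hVW : ∀ t z : ℝ, V t z = Real.exp (m * Φ (t + z)) / Real.exp (m * ψ t) := by
    intro t z
    rw [hV, mul_sub, Real.exp_sub]
  -- integrability of `H (t + ·)` with respect to the Gaussian
  have hHint : ∀ t : ℝ,
      Integrable (fun z => Real.exp (m * Φ (t + z)) * f (t + z)) (gaussianReal 0 σ2) := by
    intro t
    have h2 := (hint t).const_mul (Real.exp (m * ψ t))
    refine h2.congr (Filter.Eventually.of_forall fun z => ?_)
    simp only [hVW]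
    field_simp
  -- representation of g
  have hgc : ∀ t : ℝ, g t = (Real.exp (m * ψ t))⁻¹ *
      ∫ z, Real.exp (m * Φ (t + z)) * f (t + z) ∂(gaussianReal 0 σ2) := by
    intro t
    rw [hg]
    have : (fun z => V t z * f (t + z))
        = fun z => (Real.exp (m * ψ t))⁻¹ * (Real.exp (m * Φ (t + z)) * f (t + z)) := by
      funext z
      rw [hVW]
      field_simp
    rw [this, integral_const_mul]
  -- nonnegativity
  have hgnn : ∀ x, 0 ≤ g x := by
    intro x
    rw [hg]
    refine integral_nonneg fun z => mul_nonneg ?_ (hfnonneg _)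
    rw [hV]; exact (Real.exp_pos _).le
  -- symmetry of the Gaussian measure under negation
  have hmapneg : (gaussianReal 0 σ2).map (fun z : ℝ => -z) = gaussianReal 0 σ2 := by
    have := gaussianReal_map_const_mul (μ := 0) (v := σ2) (-1)
    have h2 : (fun z : ℝ => -z) = fun z : ℝ => (-1 : ℝ) * z := by
      funext z; ring
    rw [h2]
    simpa using this
  have hnegint : ∀ h : ℝ → ℝ, ∫ z, h (-z) ∂(gaussianReal 0 σ2)
      = ∫ z, h z ∂(gaussianReal 0 σ2) := by
    intro h
    conv_rhs => rw [← hmapneg]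
    exact (MeasureTheory.integral_map_equiv (MeasurableEquiv.neg ℝ) h).symm
  have hψeven : ∀ x, ψ (-x) = ψ x := by
    intro x
    rw [hψ, hψ]
    congr 2
    rw [← hnegint (fun z => Real.exp (m * Φ (-x + z)))]
    congr 1
    funext z
    rw [show -x + -z = -(x + z) by ring, hΦsymm]
  have hgeven : ∀ x, g (-x) = g x := by
    intro x
    rw [hg, hg, ← hnegint (fun z => V (-x) z * f (-x + z))]
    congr 1
    funext z
    rw [hV, hV, show -x + -z = -(x + z) by ring, hΦsymm, hψeven, hfeven]
  refine ⟨hgnn, hgeven, ?_⟩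
  -- monotonicity
  intro x hx y hy hxy
  have hx0 : (0:ℝ) ≤ x := hx
  -- transfers
  obtain ⟨hWiffx, hWeqx⟩ := transfer_s hσ2 (fun u => Real.exp (m * Φ u)) hWmeas hWnn hWeven x
  obtain ⟨hWiffy, hWeqy⟩ := transfer_s hσ2 (fun u => Real.exp (m * Φ u)) hWmeas hWnn hWeven y
  obtain ⟨hHiffx, hHeqx⟩ := transfer_s hσ2 (fun u => Real.exp (m * Φ u) * f u)
    hHmeas hHnn hHeven x
  obtain ⟨hHiffy, hHeqy⟩ := transfer_s hσ2 (fun u => Real.exp (m * Φ u) * f u)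
    hHmeas hHnn hHeven y
  -- sden is an (even) probability density
  have hs_int : ∀ t : ℝ, Integrable (fun u => sden σ2 t u) ∧ (∫ u, sden σ2 t u) = 1 := by
    intro t
    obtain ⟨hiff, heq⟩ := transfer_s hσ2 (fun _ => (1:ℝ)) measurable_const
      (fun _ => zero_le_one) (fun _ => rfl) t
    have h1 : Integrable (fun _ : ℝ => (1:ℝ)) (gaussianReal 0 σ2) := integrable_const 1
    have hint1 : ∫ _ : ℝ, (1:ℝ) ∂(gaussianReal 0 σ2) = 1 := by simp
    constructor
    · have := hiff.1 h1
      simpa using this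
    · rw [hint1] at heq
      have := heq.symm
      simpa using this
  -- 1 ≤ Z t when integrable
  have hZ1 : ∀ t : ℝ, Integrable (fun z => Real.exp (m * Φ (t + z))) (gaussianReal 0 σ2) →
      (1:ℝ) ≤ ∫ z, Real.exp (m * Φ (t + z)) ∂(gaussianReal 0 σ2) := by
    intro t hP
    have h0 : ∫ _ : ℝ, (1:ℝ) ∂(gaussianReal 0 σ2) = 1 := by simp
    calc (1:ℝ) = ∫ _ : ℝ, (1:ℝ) ∂(gaussianReal 0 σ2) := h0.symm
      _ ≤ ∫ z, Real.exp (m * Φ (t + z)) ∂(gaussianReal 0 σ2) :=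
        integral_mono (integrable_const 1) hP (fun z => hW1 _)
  -- exp(mψ) equals Z when integrable
  have hcZ : ∀ t : ℝ, Integrable (fun z => Real.exp (m * Φ (t + z))) (gaussianReal 0 σ2) →
      Real.exp (m * ψ t) = ∫ z, Real.exp (m * Φ (t + z)) ∂(gaussianReal 0 σ2) := by
    intro t hP
    by_cases hm0 : m = 0
    · subst hm0
      simp only [zero_mul, Real.exp_zero]
      simp
    · have hm' : 0 < m := lt_of_le_of_ne hm (Ne.symm hm0)
      have hZpos : (0:ℝ) < ∫ z, Real.exp (m * Φ (t + z)) ∂(gaussianReal 0 σ2) :=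
        lt_of_lt_of_le one_pos (hZ1 t hP)
      rw [hψ]
      rw [show m * (1 / m * Real.log (∫ z, Real.exp (m * Φ (t + z)) ∂(gaussianReal 0 σ2)))
        = Real.log (∫ z, Real.exp (m * Φ (t + z)) ∂(gaussianReal 0 σ2)) by field_simp]
      exact Real.exp_log hZpos
  -- the likelihood ratio
  set r : ℝ → ℝ := fun u => sden σ2 y u / sden σ2 x u with hrdef
  have hrs : ∀ u, r u * sden σ2 x u = sden σ2 y u := by
    intro u
    exact div_mul_cancel₀ _ (ne_of_gt (sden_pos hσ2 x u))
  have habsr : ∀ u v : ℝ, |v| ≤ |u| → r v ≤ r u := by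
    intro u v h
    show sden σ2 y v / sden σ2 x v ≤ sden σ2 y u / sden σ2 x u
    rw [div_le_div_iff₀ (sden_pos hσ2 x v) (sden_pos hσ2 x u)]
    exact sden_cmp hσ2 hx0 hxy h
  have hcm : ∀ (F R : ℝ → ℝ), (∀ u v, |v| ≤ |u| → F v ≤ F u) →
      (∀ u v, |v| ≤ |u| → R v ≤ R u) → ∀ u v, 0 ≤ (F u - F v) * (R u - R v) := by
    intro F R hF hR u v
    rcases le_total |v| |u| with h | h
    · exact mul_nonneg (sub_nonneg.2 (hF u v h)) (sub_nonneg.2 (hR u v h))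
    · rw [show (F u - F v) * (R u - R v) = (F v - F u) * (R v - R u) by ring]
      exact mul_nonneg (sub_nonneg.2 (hF v u h)) (sub_nonneg.2 (hR v u h))
  -- Lebesgue integrability of H against sden at x and y
  have hHLx : Integrable (fun u => Real.exp (m * Φ u) * f u * sden σ2 x u) :=
    hHiffx.1 (hHint x)
  have hHLy : Integrable (fun u => Real.exp (m * Φ u) * f u * sden σ2 y u) :=
    hHiffy.1 (hHint y)
  have hNx_nn : 0 ≤ ∫ u, Real.exp (m * Φ u) * f u * sden σ2 x u :=
    integral_nonneg fun u => mul_nonneg (hHnn u) (sden_pos hσ2 x u).le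
  by_cases hPy : Integrable (fun z => Real.exp (m * Φ (y + z))) (gaussianReal 0 σ2)
  · -- normalized case: both tilts integrable
    have hWLy : Integrable (fun u => Real.exp (m * Φ u) * sden σ2 y u) := hWiffy.1 hPy
    have hWLx : Integrable (fun u => Real.exp (m * Φ u) * sden σ2 x u) := by
      refine (hWLy.const_mul (Real.exp ((y^2 - x^2) / (2*σ2)))).mono
        ((hWmeas.mul (sden_meas σ2 x)).aestronglyMeasurable)
        (Filter.Eventually.of_forall fun u => ?_)
      have h1 : 0 ≤ Real.exp (m * Φ u) * sden σ2 x u :=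
        mul_nonneg (hWnn u) (sden_pos hσ2 x u).le
      have h2 : Real.exp (m * Φ u) * sden σ2 x u
          ≤ Real.exp ((y^2 - x^2) / (2*σ2)) * (Real.exp (m * Φ u) * sden σ2 y u) := by
        have := mul_le_mul_of_nonneg_left (sden_le hσ2 hx0 hxy u) (hWnn u)
        calc Real.exp (m * Φ u) * sden σ2 x u
            ≤ Real.exp (m * Φ u) * (Real.exp ((y^2-x^2)/(2*σ2)) * sden σ2 y u) := this
          _ = Real.exp ((y^2 - x^2) / (2*σ2)) * (Real.exp (m * Φ u) * sden σ2 y u) := by ring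
      rw [Real.norm_eq_abs, Real.norm_eq_abs, abs_of_nonneg h1]
      exact h2.trans (le_abs_self _)
    have hPx : Integrable (fun z => Real.exp (m * Φ (x + z))) (gaussianReal 0 σ2) :=
      hWiffx.2 hWLx
    -- Z values
    have hZx1 : (1:ℝ) ≤ ∫ u, Real.exp (m * Φ u) * sden σ2 x u := by
      rw [← hWeqx]; exact hZ1 x hPx
    have hZy1 : (1:ℝ) ≤ ∫ u, Real.exp (m * Φ u) * sden σ2 y u := by
      rw [← hWeqy]; exact hZ1 y hPy
    have hcx : Real.exp (m * ψ x) = ∫ u, Real.exp (m * Φ u) * sden σ2 x u := by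
      rw [hcZ x hPx, hWeqx]
    have hcy : Real.exp (m * ψ y) = ∫ u, Real.exp (m * Φ u) * sden σ2 y u := by
      rw [hcZ y hPy, hWeqy]
    -- Chebyshev with weight W * sden x, functions f and r
    have hIF : Integrable (fun u => f u * (Real.exp (m * Φ u) * sden σ2 x u)) :=
      hHLx.congr (Filter.Eventually.of_forall fun u => by ring)
    have hIR : Integrable (fun u => r u * (Real.exp (m * Φ u) * sden σ2 x u)) :=
      hWLy.congr (Filter.Eventually.of_forall fun u => by
        linear_combination (-(Real.exp (m * Φ u))) * hrs u)
    have hIFR : Integrable (fun u => f u * r u * (Real.exp (m * Φ u) * sden σ2 x u)) :=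
      hHLy.congr (Filter.Eventually.of_forall fun u => by
        linear_combination (-(f u * Real.exp (m * Φ u))) * hrs u)
    have hkey := cheb (fun u => Real.exp (m * Φ u) * sden σ2 x u) f r
      (hcm f r habsf habsr)
      (fun u => mul_nonneg (hWnn u) (sden_pos hσ2 x u).le)
      hWLx hIF hIR hIFR
    -- identify the four integrals
    have e1 : ∫ u, f u * (Real.exp (m * Φ u) * sden σ2 x u)
        = ∫ u, Real.exp (m * Φ u) * f u * sden σ2 x u := by
      rw [show (fun u => f u * (Real.exp (m * Φ u) * sden σ2 x u))
        = fun u => Real.exp (m * Φ u) * f u * sden σ2 x u from funext fun u => by ring]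
    have e2 : ∫ u, r u * (Real.exp (m * Φ u) * sden σ2 x u)
        = ∫ u, Real.exp (m * Φ u) * sden σ2 y u := by
      rw [show (fun u => r u * (Real.exp (m * Φ u) * sden σ2 x u))
        = fun u => Real.exp (m * Φ u) * sden σ2 y u from
        funext fun u => by linear_combination (Real.exp (m * Φ u)) * hrs u]
    have e3 : ∫ u, f u * r u * (Real.exp (m * Φ u) * sden σ2 x u)
        = ∫ u, Real.exp (m * Φ u) * f u * sden σ2 y u := by
      rw [show (fun u => f u * r u * (Real.exp (m * Φ u) * sden σ2 x u))
        = fun u => Real.exp (m * Φ u) * f u * sden σ2 y u from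
        funext fun u => by linear_combination (f u * Real.exp (m * Φ u)) * hrs u]
    rw [e1, e2, e3] at hkey
    -- conclude
    rw [hgc x, hgc y, hHeqx, hHeqy, hcx, hcy]
    rw [inv_mul_eq_div, inv_mul_eq_div]
    rw [div_le_div_iff₀ (lt_of_lt_of_le one_pos hZx1) (lt_of_lt_of_le one_pos hZy1)]
    linarith [hkey]
  · -- unnormalized case: tilt at y not integrable
    have hψy : ψ y = 0 := by
      rw [hψ, integral_undef hPy, Real.log_zero, mul_zero]
    have hgy : g y = ∫ u, Real.exp (m * Φ u) * f u * sden σ2 y u := by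
      rw [hgc y, hψy, hHeqy]
      simp
    -- exp (m ψ x) ≥ 1
    have hψx0 : 0 ≤ ψ x := by
      by_cases hPx : Integrable (fun z => Real.exp (m * Φ (x + z))) (gaussianReal 0 σ2)
      · rw [hψ]
        have := hZ1 x hPx
        have hlog : 0 ≤ Real.log (∫ z, Real.exp (m * Φ (x + z)) ∂(gaussianReal 0 σ2)) :=
          Real.log_nonneg this
        exact mul_nonneg (by positivity) hlog
      · rw [hψ, integral_undef hPx, Real.log_zero, mul_zero]
    have hcx1 : (1:ℝ) ≤ Real.exp (m * ψ x) := by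
      rw [show (1:ℝ) = Real.exp 0 from (Real.exp_zero).symm]
      exact Real.exp_le_exp.2 (mul_nonneg hm hψx0)
    have hgx_le : g x ≤ ∫ u, Real.exp (m * Φ u) * f u * sden σ2 x u := by
      rw [hgc x, hHeqx]
      calc (Real.exp (m * ψ x))⁻¹ * ∫ u, Real.exp (m * Φ u) * f u * sden σ2 x u
          ≤ 1 * ∫ u, Real.exp (m * Φ u) * f u * sden σ2 x u := by
            apply mul_le_mul_of_nonneg_right _ hNx_nn
            rw [inv_le_one_iff₀]
            right; exact hcx1
        _ = ∫ u, Real.exp (m * Φ u) * f u * sden σ2 x u := one_mul _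
    -- Chebyshev with weight sden x, functions H and r
    have hIF : Integrable (fun u => (Real.exp (m * Φ u) * f u) * sden σ2 x u) := hHLx
    have hIR : Integrable (fun u => r u * sden σ2 x u) :=
      (hs_int y).1.congr (Filter.Eventually.of_forall fun u => by
        linear_combination (-1 : ℝ) * hrs u)
    have hIFR : Integrable (fun u => (Real.exp (m * Φ u) * f u) * r u * sden σ2 x u) :=
      hHLy.congr (Filter.Eventually.of_forall fun u => by
        linear_combination (-(Real.exp (m * Φ u) * f u)) * hrs u)
    have hkey := cheb (fun u => sden σ2 x u) (fun u => Real.exp (m * Φ u) * f u) r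
      (hcm _ r habsH habsr)
      (fun u => (sden_pos hσ2 x u).le)
      (hs_int x).1 hIF hIR hIFR
    have e2 : ∫ u, r u * sden σ2 x u = 1 := by
      rw [show (fun u => r u * sden σ2 x u) = fun u => sden σ2 y u from
        funext fun u => hrs u]
      exact (hs_int y).2
    have e3 : ∫ u, (Real.exp (m * Φ u) * f u) * r u * sden σ2 x u
        = ∫ u, Real.exp (m * Φ u) * f u * sden σ2 y u := by
      rw [show (fun u => (Real.exp (m * Φ u) * f u) * r u * sden σ2 x u)
        = fun u => Real.exp (m * Φ u) * f u * sden σ2 y u from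
        funext fun u => by linear_combination (Real.exp (m * Φ u) * f u) * hrs u]
    rw [e2, (hs_int x).2] at hkey
    rw [mul_one, mul_one] at hkey
    rw [e3] at hkey
    calc g x ≤ ∫ u, Real.exp (m * Φ u) * f u * sden σ2 x u := hgx_le
      _ ≤ ∫ u, Real.exp (m * Φ u) * f u * sden σ2 y u := hkey
      _ = g y := hgy.symm
end

section
/- If f ∈ 𝒞′ (odd, nondecreasing on [0,∞)), then x ↦ E[V(x,z) f(x+z)] is also in 𝒞′, where V is the Gibbs change of density associated with a convex symmetric Φ̃. -/
open MeasureTheory ProbabilityTheory Real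
open scoped ENNReal NNReal

lemma auxC_monotone {f : ℝ → ℝ} (hodd : ∀ x, f (-x) = -f x)
    (hm : MonotoneOn f (Set.Ici (0:ℝ))) : Monotone f := by
  have h0 : f 0 = 0 := by have := hodd 0; simp at this; linarith
  intro a b hab
  rcases le_total 0 a with ha | ha
  · exact hm ha (ha.trans hab) hab
  · rcases le_total 0 b with hb | hb
    · have h1 : (0:ℝ) ≤ f (-a) :=
        h0 ▸ hm (Set.mem_Ici.2 le_rfl) (Set.mem_Ici.2 (by linarith)) (by linarith)
      have h2 : f a ≤ 0 := by have := hodd a; nlinarith [h1]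
      have h3 : 0 ≤ f b := h0 ▸ hm (Set.mem_Ici.2 le_rfl) (Set.mem_Ici.2 hb) hb
      linarith
    · have h1 : f (-b) ≤ f (-a) :=
        hm (Set.mem_Ici.2 (by linarith)) (Set.mem_Ici.2 (by linarith)) (by linarith)
      have := hodd a; have := hodd b; linarith

lemma auxC_phi_bound {Φ : ℝ → ℝ} (hconv : ConvexOn ℝ Set.univ Φ)
    (hsymm : ∀ x, Φ (-x) = Φ x) {a u : ℝ} (h : |u| ≤ a) : Φ u ≤ Φ a := by
  have h1 : Φ u ≤ max (Φ (-a)) (Φ a) :=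
    hconv.le_max_of_mem_Icc (Set.mem_univ _) (Set.mem_univ _) (abs_le.1 h)
  rwa [hsymm a, max_self] at h1

lemma auxC_mlr (σ2 : NNReal) {x y u v : ℝ} (hxy : x ≤ y) (huv : u ≤ v) :
    gaussianPDFReal y σ2 u * gaussianPDFReal x σ2 v ≤
      gaussianPDFReal x σ2 u * gaussianPDFReal y σ2 v := by
  rcases eq_or_ne σ2 0 with h | h
  · simp [h]
  have hσ : (0:ℝ) < (σ2 : ℝ) := by positivity
  simp only [gaussianPDFReal]
  calc (√(2 * π * σ2))⁻¹ * rexp (-(u - y)^2 / (2*σ2)) * ((√(2 * π * σ2))⁻¹ * rexp (-(v - x)^2 / (2*σ2)))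
      = (√(2 * π * σ2))⁻¹ * (√(2 * π * σ2))⁻¹ * rexp (-(u - y)^2 / (2*σ2) + -(v - x)^2 / (2*σ2)) := by
        rw [Real.exp_add]; ring
    _ ≤ (√(2 * π * σ2))⁻¹ * (√(2 * π * σ2))⁻¹ * rexp (-(u - x)^2 / (2*σ2) + -(v - y)^2 / (2*σ2)) := by
        apply mul_le_mul_of_nonneg_left _ (by positivity)
        apply Real.exp_le_exp.2
        rw [← add_div, ← add_div]
        apply div_le_div_of_nonneg_right _ (by positivity)
        nlinarith [mul_nonneg (sub_nonneg.2 hxy) (sub_nonneg.2 huv)]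
    _ = (√(2 * π * σ2))⁻¹ * rexp (-(u - x)^2 / (2*σ2)) * ((√(2 * π * σ2))⁻¹ * rexp (-(v - y)^2 / (2*σ2))) := by
        rw [Real.exp_add]; ring

lemma auxC_corr {f p q : ℝ → ℝ} (hf : Monotone f)
    (hp : Integrable p (volume : Measure ℝ)) (hq : Integrable q volume)
    (hfp : Integrable (fun u => f u * p u) volume)
    (hfq : Integrable (fun u => f u * q u) volume)
    (hmlr : ∀ u v, u ≤ v → q u * p v ≤ p u * q v) :
    (∫ u, f u * p u) * (∫ u, q u) ≤ (∫ u, f u * q u) * (∫ u, p u) := by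
  have hA : Integrable (fun z : ℝ × ℝ => p z.1 * (f z.2 * q z.2) + (f z.1 * q z.1) * p z.2)
      (volume.prod volume) := (hp.mul_prod hfq).add (hfq.mul_prod hp)
  have hB : Integrable (fun z : ℝ × ℝ => q z.1 * (f z.2 * p z.2) + (f z.1 * p z.1) * q z.2)
      (volume.prod volume) := (hq.mul_prod hfp).add (hfp.mul_prod hq)
  have hle : ∀ z : ℝ × ℝ, q z.1 * (f z.2 * p z.2) + (f z.1 * p z.1) * q z.2 ≤
      p z.1 * (f z.2 * q z.2) + (f z.1 * q z.1) * p z.2 := by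
    rintro ⟨u, v⟩
    have key : 0 ≤ (f v - f u) * (p u * q v - q u * p v) := by
      rcases le_total u v with h | h
      · exact mul_nonneg (sub_nonneg.2 (hf h)) (sub_nonneg.2 (hmlr u v h))
      · have h1 := hf h
        have h2 := hmlr v u h
        nlinarith
    dsimp only
    nlinarith [key]
  have hint := integral_mono hB hA hle
  rw [integral_add (hq.mul_prod hfp) (hfp.mul_prod hq),
    integral_add (hp.mul_prod hfq) (hfq.mul_prod hp)] at hint
  have e1 : ∫ (a : ℝ × ℝ), q a.1 * (f a.2 * p a.2) ∂(volume.prod volume)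
      = (∫ u, q u) * ∫ u, f u * p u := integral_prod_mul q (fun u => f u * p u)
  have e2 : ∫ (a : ℝ × ℝ), f a.1 * p a.1 * q a.2 ∂(volume.prod volume)
      = (∫ u, f u * p u) * ∫ u, q u := integral_prod_mul (fun u => f u * p u) q
  have e3 : ∫ (a : ℝ × ℝ), p a.1 * (f a.2 * q a.2) ∂(volume.prod volume)
      = (∫ u, p u) * ∫ u, f u * q u := integral_prod_mul p (fun u => f u * q u)
  have e4 : ∫ (a : ℝ × ℝ), f a.1 * q a.1 * p a.2 ∂(volume.prod volume)
      = (∫ u, f u * q u) * ∫ u, p u := integral_prod_mul (fun u => f u * q u) p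
  rw [e1, e2, e3, e4] at hint
  linarith

lemma auxC_transfer {σ2 : NNReal} (hσ2 : σ2 ≠ 0) (x : ℝ) (h : ℝ → ℝ)
    (hi : Integrable (fun z => h (x + z)) (gaussianReal 0 σ2)) :
    Integrable (fun u => h u * gaussianPDFReal x σ2 u) volume ∧
      ∫ z, h (x + z) ∂(gaussianReal 0 σ2) = ∫ u, h u * gaussianPDFReal x σ2 u := by
  have hmeas : Measurable (fun u => (gaussianPDFReal 0 σ2 u).toNNReal) :=
    (measurable_gaussianPDFReal 0 σ2).real_toNNReal
  have hγ : gaussianReal 0 σ2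
      = volume.withDensity (fun u => ((gaussianPDFReal 0 σ2 u).toNNReal : ℝ≥0∞)) := by
    rw [gaussianReal_of_var_ne_zero 0 hσ2]
    rfl
  rw [hγ] at hi ⊢
  rw [integrable_withDensity_iff_integrable_smul hmeas] at hi
  have hco : ∀ z : ℝ, (gaussianPDFReal 0 σ2 z).toNNReal • h (x + z)
      = h (x + z) * gaussianPDFReal 0 σ2 z := by
    intro z
    rw [NNReal.smul_def, smul_eq_mul, Real.coe_toNNReal _ (gaussianPDFReal_nonneg 0 σ2 z)]
    ring
  have hi2 : Integrable (fun z => h (x + z) * gaussianPDFReal 0 σ2 z) volume :=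
    hi.congr (Filter.Eventually.of_forall hco)
  have hfun : ∀ u : ℝ, h (x + (u - x)) * gaussianPDFReal 0 σ2 (u - x)
      = h u * gaussianPDFReal x σ2 u := by
    intro u
    rw [gaussianPDFReal_sub, zero_add, add_sub_cancel]
  constructor
  · exact (hi2.comp_sub_right x).congr (Filter.Eventually.of_forall hfun)
  · rw [integral_withDensity_eq_integral_smul hmeas]
    calc ∫ z, (gaussianPDFReal 0 σ2 z).toNNReal • h (x + z)
        = ∫ z, h (x + z) * gaussianPDFReal 0 σ2 z :=
          integral_congr_ae (Filter.Eventually.of_forall hco)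
      _ = ∫ u, h (x + (u - x)) * gaussianPDFReal 0 σ2 (u - x) :=
          (integral_sub_right_eq_self (fun z => h (x + z) * gaussianPDFReal 0 σ2 z) x).symm
      _ = ∫ u, h u * gaussianPDFReal x σ2 u :=
          integral_congr_ae (Filter.Eventually.of_forall hfun)

/-- Lemma 2(e): the class `𝒞′` (odd, nondecreasing on `[0,∞)`)
is preserved by the tilted Gaussian smoothing operator
`f ↦ (x ↦ E[V(x,z) f(x+z)])`. -/
theorem gibbs_preserves_Cprime
    (Φ : ℝ → ℝ) (hΦsmooth : ContDiff ℝ (⊤ : ℕ∞) Φ)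
    (hΦconv : ConvexOn ℝ Set.univ Φ)
    (hΦsymm : ∀ x, Φ (-x) = Φ x) (hΦnonneg : ∀ x, 0 ≤ Φ x)
    (σ2 : NNReal) (hσ2 : 0 < σ2) (m : ℝ) (hm : 0 ≤ m)
    (f : ℝ → ℝ) (hfodd : ∀ x, f (-x) = -f x)
    (hfmono : MonotoneOn f (Set.Ici (0 : ℝ)))
    (ψ : ℝ → ℝ)
    (hψ : ∀ x, ψ x = (1 / m) *
      Real.log (∫ z, Real.exp (m * Φ (x + z)) ∂(gaussianReal 0 σ2)))
    (V : ℝ → ℝ → ℝ)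
    (hV : ∀ x z, V x z = Real.exp (m * (Φ (x + z) - ψ x)))
    (hint : ∀ x, Integrable (fun z => V x z * f (x + z)) (gaussianReal 0 σ2))
    (g : ℝ → ℝ)
    (hg : ∀ x, g x = ∫ z, V x z * f (x + z) ∂(gaussianReal 0 σ2)) :
    (∀ x, g (-x) = -g x) ∧ MonotoneOn g (Set.Ici (0 : ℝ)) := by
  have hσ2' : σ2 ≠ 0 := hσ2.ne'
  -- symmetry of the Gaussian
  have hnegint : ∀ h : ℝ → ℝ, ∫ z, h (-z) ∂(gaussianReal 0 σ2)
      = ∫ z, h z ∂(gaussianReal 0 σ2) := by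
    intro h
    have hmap : (gaussianReal 0 σ2).map (fun z : ℝ => -z) = gaussianReal 0 σ2 := by
      have h := gaussianReal_map_const_mul (μ := 0) (v := σ2) (-1)
      simp only [neg_one_mul, mul_zero] at h
      convert h using 2
      ext
      norm_num
    have he : MeasurableEmbedding (fun z : ℝ => -z) :=
      (Homeomorph.neg ℝ).toMeasurableEquiv.measurableEmbedding
    conv_lhs => rw [← he.integral_map (g := h)]
    rw [hmap]
  -- ψ is even
  have hψeven : ∀ x, ψ (-x) = ψ x := by
    intro x
    rw [hψ, hψ]
    congr 2
    calc ∫ z, rexp (m * Φ (-x + z)) ∂(gaussianReal 0 σ2)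
        = ∫ z, rexp (m * Φ (-x + -z)) ∂(gaussianReal 0 σ2) :=
          (hnegint (fun z => rexp (m * Φ (-x + z)))).symm
      _ = ∫ z, rexp (m * Φ (x + z)) ∂(gaussianReal 0 σ2) := by
          congr 1
          funext z
          rw [show -x + -z = -(x + z) by ring, hΦsymm]
  -- oddness of g
  have hoddg : ∀ x, g (-x) = -g x := by
    intro x
    rw [hg, hg]
    calc ∫ z, V (-x) z * f (-x + z) ∂(gaussianReal 0 σ2)
        = ∫ z, V (-x) (-z) * f (-x + -z) ∂(gaussianReal 0 σ2) :=
          (hnegint (fun z => V (-x) z * f (-x + z))).symm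
      _ = ∫ z, -(V x z * f (x + z)) ∂(gaussianReal 0 σ2) := by
          congr 1
          funext z
          rw [hV, hV, hψeven, show -x + -z = -(x + z) by ring, hΦsymm, hfodd]
          ring
      _ = -∫ z, V x z * f (x + z) ∂(gaussianReal 0 σ2) := integral_neg _
  refine ⟨hoddg, ?_⟩
  by_cases hf0 : ∀ u, f u = 0
  · intro p _ q _ _
    rw [hg, hg]
    simp only [hf0, mul_zero, integral_zero, le_refl]
  -- nontrivial case
  push_neg at hf0
  obtain ⟨b, hb⟩ := hf0
  have hfmonoR : Monotone f := auxC_monotone hfodd hfmono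
  have hf00 : f 0 = 0 := by have := hfodd 0; simp at this; linarith
  obtain ⟨a, hfa⟩ : ∃ a : ℝ, 0 < f a := by
    rcases lt_trichotomy (f b) 0 with h | h | h
    · exact ⟨-b, by rw [hfodd]; linarith⟩
    · exact absurd h hb
    · exact ⟨b, h⟩
  -- integrability of the tilted integrand
  have hNint : ∀ x, Integrable (fun z => rexp (m * Φ (x + z)) * f (x + z))
      (gaussianReal 0 σ2) := by
    intro x
    have h1 := (hint x).const_mul (rexp (m * ψ x))
    refine h1.congr (Filter.Eventually.of_forall fun z => ?_)
    dsimp only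
    rw [hV, ← mul_assoc, ← Real.exp_add]
    congr 2
    ring
  have hDint : ∀ x, Integrable (fun z => rexp (m * Φ (x + z))) (gaussianReal 0 σ2) := by
    intro x
    have hbound : ∀ z : ℝ, ‖rexp (m * Φ (x + z))‖ ≤
        rexp (m * Φ a) + (f a)⁻¹ * ‖rexp (m * Φ (x + z)) * f (x + z)‖ := by
      intro z
      rw [Real.norm_eq_abs, abs_of_pos (Real.exp_pos _)]
      rcases le_total (x + z) a with h1 | h1
      · rcases le_total (-a) (x + z) with h2 | h2
        · have hΦb : Φ (x + z) ≤ Φ a := auxC_phi_bound hΦconv hΦsymm (abs_le.2 ⟨h2, h1⟩)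
          have hee : rexp (m * Φ (x + z)) ≤ rexp (m * Φ a) :=
            Real.exp_le_exp.2 (mul_le_mul_of_nonneg_left hΦb hm)
          have hnn : 0 ≤ (f a)⁻¹ * ‖rexp (m * Φ (x + z)) * f (x + z)‖ := by positivity
          linarith
        · have hfu : f (x + z) ≤ -f a := by
            have h3 := hfmonoR h2
            rw [hfodd] at h3
            linarith
          have h4 : f a * rexp (m * Φ (x + z)) ≤ ‖rexp (m * Φ (x + z)) * f (x + z)‖ := by
            rw [Real.norm_eq_abs, abs_mul, abs_of_pos (Real.exp_pos _)]
            nlinarith [Real.exp_pos (m * Φ (x + z)), neg_abs_le (f (x + z))]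
          have h5 := mul_le_mul_of_nonneg_left h4 (inv_nonneg.2 hfa.le)
          rw [← mul_assoc, inv_mul_cancel₀ hfa.ne', one_mul] at h5
          linarith [Real.exp_pos (m * Φ a)]
      · have hfu : f a ≤ f (x + z) := hfmonoR h1
        have h4 : f a * rexp (m * Φ (x + z)) ≤ ‖rexp (m * Φ (x + z)) * f (x + z)‖ := by
          rw [Real.norm_eq_abs, abs_mul, abs_of_pos (Real.exp_pos _),
            abs_of_pos (lt_of_lt_of_le hfa hfu)]
          nlinarith [Real.exp_pos (m * Φ (x + z))]
        have h5 := mul_le_mul_of_nonneg_left h4 (inv_nonneg.2 hfa.le)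
        rw [← mul_assoc, inv_mul_cancel₀ hfa.ne', one_mul] at h5
        linarith [Real.exp_pos (m * Φ a)]
    refine Integrable.mono'
      ((integrable_const (rexp (m * Φ a))).add ((hNint x).norm.const_mul (f a)⁻¹))
      ?_ (Filter.Eventually.of_forall hbound)
    exact (Real.continuous_exp.comp (continuous_const.mul
      (hΦsmooth.continuous.comp (continuous_const.add continuous_id)))).aestronglyMeasurable
  have hDpos : ∀ x : ℝ, 0 < ∫ z, rexp (m * Φ (x + z)) ∂(gaussianReal 0 σ2) :=
    fun x => integral_exp_pos (hDint x)
  -- g x = N x / D x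
  have hgND : ∀ x : ℝ, g x = (∫ z, rexp (m * Φ (x + z)) * f (x + z) ∂(gaussianReal 0 σ2)) /
      (∫ z, rexp (m * Φ (x + z)) ∂(gaussianReal 0 σ2)) := by
    intro x
    have hexp : rexp (-(m * ψ x)) = (∫ z, rexp (m * Φ (x + z)) ∂(gaussianReal 0 σ2))⁻¹ := by
      rcases eq_or_lt_of_le hm with hm0 | hm0
      · have hD1 : ∫ z, rexp (m * Φ (x + z)) ∂(gaussianReal 0 σ2) = 1 := by
          simp [← hm0]
        rw [hD1, ← hm0]
        norm_num
      · have hψx : m * ψ x = Real.log (∫ z, rexp (m * Φ (x + z)) ∂(gaussianReal 0 σ2)) := by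
          rw [hψ x]
          field_simp
        rw [hψx, Real.exp_neg, Real.exp_log (hDpos x)]
    rw [hg x]
    calc ∫ z, V x z * f (x + z) ∂(gaussianReal 0 σ2)
        = ∫ z, rexp (-(m * ψ x)) * (rexp (m * Φ (x + z)) * f (x + z)) ∂(gaussianReal 0 σ2) := by
          congr 1
          funext z
          rw [hV, ← mul_assoc, ← Real.exp_add]
          congr 2
          ring
      _ = rexp (-(m * ψ x)) * ∫ z, rexp (m * Φ (x + z)) * f (x + z) ∂(gaussianReal 0 σ2) :=
          integral_const_mul _ _
      _ = _ := by rw [hexp, div_eq_mul_inv, mul_comm]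
  -- key correlation inequality
  have key : ∀ x y : ℝ, x ≤ y →
      (∫ z, rexp (m * Φ (x + z)) * f (x + z) ∂(gaussianReal 0 σ2)) *
        (∫ z, rexp (m * Φ (y + z)) ∂(gaussianReal 0 σ2)) ≤
      (∫ z, rexp (m * Φ (y + z)) * f (y + z) ∂(gaussianReal 0 σ2)) *
        (∫ z, rexp (m * Φ (x + z)) ∂(gaussianReal 0 σ2)) := by
    intro x y hxy
    have tDx := auxC_transfer hσ2' x (fun u => rexp (m * Φ u)) (hDint x)
    have tDy := auxC_transfer hσ2' y (fun u => rexp (m * Φ u)) (hDint y)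
    have tNx := auxC_transfer hσ2' x (fun u => rexp (m * Φ u) * f u) (hNint x)
    have tNy := auxC_transfer hσ2' y (fun u => rexp (m * Φ u) * f u) (hNint y)
    set P : ℝ → ℝ → ℝ := fun t u => rexp (m * Φ u) * gaussianPDFReal t σ2 u with hP
    have hre : ∀ t : ℝ, (fun u => rexp (m * Φ u) * f u * gaussianPDFReal t σ2 u)
        = fun u => f u * P t u := by
      intro t; funext u; rw [hP]; ring
    have hfpx : Integrable (fun u => f u * P x u) volume := hre x ▸ tNx.1
    have hfpy : Integrable (fun u => f u * P y u) volume := hre y ▸ tNy.1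
    have hNx : ∫ z, rexp (m * Φ (x + z)) * f (x + z) ∂(gaussianReal 0 σ2)
        = ∫ u, f u * P x u := by rw [tNx.2, hre x]
    have hNy : ∫ z, rexp (m * Φ (y + z)) * f (y + z) ∂(gaussianReal 0 σ2)
        = ∫ u, f u * P y u := by rw [tNy.2, hre y]
    have hmlr : ∀ u v, u ≤ v → P y u * P x v ≤ P x u * P y v := by
      intro u v huv
      have h1 := auxC_mlr σ2 (x := x) (y := y) (u := u) (v := v) hxy huv
      calc P y u * P x v
          = (rexp (m * Φ u) * rexp (m * Φ v)) *
            (gaussianPDFReal y σ2 u * gaussianPDFReal x σ2 v) := by rw [hP]; ring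
        _ ≤ (rexp (m * Φ u) * rexp (m * Φ v)) *
            (gaussianPDFReal x σ2 u * gaussianPDFReal y σ2 v) :=
            mul_le_mul_of_nonneg_left h1 (by positivity)
        _ = P x u * P y v := by rw [hP]; ring
    rw [hNx, hNy, tDx.2, tDy.2]
    exact auxC_corr hfmonoR tDx.1 tDy.1 hfpx hfpy hmlr
  intro p _ q _ hpq
  rw [hgND p, hgND q, div_le_div_iff₀ (hDpos p) (hDpos q)]
  exact key p q hpq
end
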